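/- arXiv:2505.15783 — 6 statements merged into one kernel-verified Lean document; each statement's English description precedes it below -/
import Mathlib

section
/- Let q ≥ 2, d ≥ 1 be integers, β ≥ 0, and β_p = 2β + 7·log(q−1)/d (with log(q−1) := 0 if q = 2). Let ζ ∈ {1,...,q}^d be such that at least 4d/7 of its coordinates equal 1. Then exp(β_p · N_1) / ∑_{r=1}^{q} exp(β_p · N_r) ≥ 1/(1 + exp(−2βd/7)), where N_r = #{i : ζ_i = r}. -/
/-- Potts Glauber update probability lower bound: if at least `4d/7` of the neighbor
states `ζ` equal state `1` (encoded as `0 : Fin q`), and `βp = 2β + 7 log(q-1)/d`, then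
`exp(βp N₁) / ∑_r exp(βp N_r) ≥ 1/(1 + exp(-2βd/7))`, where `N r` counts coordinates
of `ζ` equal to `r`. -/
theorem stmt_2 (q d : ℕ) (hq : 2 ≤ q) (hd : 1 ≤ d) (β : ℝ) (hβ : 0 ≤ β)
    (βp : ℝ) (hβp : βp = 2 * β + 7 * Real.log ((q : ℝ) - 1) / d)
    (ζ : Fin d → Fin q)
    (N : Fin q → ℕ)
    (hN : ∀ r, N r = (Finset.univ.filter (fun i => ζ i = r)).card)
    (hmaj : (4 * (d : ℝ)) / 7 ≤ (N ⟨0, by omega⟩ : ℝ)) :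
    1 / (1 + Real.exp (-(2 * β * (d : ℝ)) / 7))
      ≤ Real.exp (βp * (N ⟨0, by omega⟩ : ℝ)) / ∑ r, Real.exp (βp * (N r : ℝ)) := by
  set z : Fin q := ⟨0, by omega⟩ with hz
  have hd0 : (0 : ℝ) < d := by exact_mod_cast hd
  have hq1 : (1 : ℝ) ≤ (q : ℝ) - 1 := by
    have : (2 : ℝ) ≤ q := by exact_mod_cast hq
    linarith
  set L : ℝ := Real.log ((q : ℝ) - 1) with hL
  have hL0 : 0 ≤ L := Real.log_nonneg hq1
  have hβp0 : 0 ≤ βp := by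
    rw [hβp]
    have : 0 ≤ 7 * L / d := div_nonneg (by linarith) hd0.le
    linarith
  -- sum of fiber counts is d
  have hsumN : ∑ r, N r = d := by
    simp_rw [hN]
    rw [← Finset.card_eq_sum_card_fiberwise (fun i _ => Finset.mem_univ (ζ i))]
    simp
  have hNle : ∀ r, r ≠ z → N z + N r ≤ d := by
    intro r hr
    have hsub : ({z, r} : Finset (Fin q)) ⊆ Finset.univ := Finset.subset_univ _
    have := Finset.sum_le_sum_of_subset hsub (f := N)
    rw [Finset.sum_pair (Ne.symm hr)] at this
    omega
  set E : ℝ := Real.exp (-(2 * β * (d : ℝ)) / 7) with hE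
  set A : ℝ := Real.exp (βp * (N z : ℝ)) with hA
  -- key exponent inequality
  have hkey : L + βp * ((d : ℝ) - N z) ≤ βp * (N z : ℝ) - 2 * β * d / 7 := by
    have hNz : (d : ℝ) / 7 ≤ 2 * (N z : ℝ) - d := by
      linarith [hmaj]
    have hmul : βp * ((d : ℝ) / 7) ≤ βp * (2 * (N z : ℝ) - d) :=
      mul_le_mul_of_nonneg_left hNz hβp0
    have heq : βp * ((d : ℝ) / 7) = 2 * β * d / 7 + L := by
      rw [hβp]
      field_simp
    nlinarith
  -- per-term bound for r ≠ z
  have hterm : ∀ r ∈ Finset.univ.erase z, Real.exp (βp * (N r : ℝ))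
      ≤ Real.exp (βp * ((d : ℝ) - N z)) := by
    intro r hr
    have hr' : r ≠ z := (Finset.mem_erase.mp hr).1
    have h1 : (N r : ℝ) ≤ (d : ℝ) - N z := by
      have := hNle r hr'
      have : ((N z : ℝ) + N r) ≤ d := by exact_mod_cast this
      linarith
    exact Real.exp_le_exp.mpr (mul_le_mul_of_nonneg_left h1 hβp0)
  have hcard : ((Finset.univ.erase z).card : ℝ) = (q : ℝ) - 1 := by
    rw [Finset.card_erase_of_mem (Finset.mem_univ z)]
    simp only [Finset.card_univ, Fintype.card_fin]
    have : 1 ≤ q := by omega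
    push_cast [Nat.cast_sub this]
    ring
  -- sum bound
  have hS : ∑ r, Real.exp (βp * (N r : ℝ)) ≤ A * (1 + E) := by
    rw [← Finset.add_sum_erase _ _ (Finset.mem_univ z)]
    have h2 : ∑ r ∈ Finset.univ.erase z, Real.exp (βp * (N r : ℝ))
        ≤ ((q : ℝ) - 1) * Real.exp (βp * ((d : ℝ) - N z)) := by
      calc ∑ r ∈ Finset.univ.erase z, Real.exp (βp * (N r : ℝ))
          ≤ ∑ _r ∈ Finset.univ.erase z, Real.exp (βp * ((d : ℝ) - N z)) :=
            Finset.sum_le_sum hterm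
        _ = ((q : ℝ) - 1) * Real.exp (βp * ((d : ℝ) - N z)) := by
            rw [Finset.sum_const, nsmul_eq_mul, hcard]
    have h3 : ((q : ℝ) - 1) * Real.exp (βp * ((d : ℝ) - N z)) ≤ A * E := by
      have hq0 : (0 : ℝ) < (q : ℝ) - 1 := by linarith
      rw [hA, hE, ← Real.exp_log hq0, ← Real.exp_add, ← Real.exp_add]
      apply Real.exp_le_exp.mpr
      have : -(2 * β * (d : ℝ)) / 7 = -(2 * β * d / 7) := by ring
      rw [this]
      linarith [hkey]
    linarith
  have hSpos : 0 < ∑ r, Real.exp (βp * (N r : ℝ)) :=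
    Finset.sum_pos (fun r _ => Real.exp_pos _) ⟨z, Finset.mem_univ z⟩
  have hApos : 0 < A := Real.exp_pos _
  have hEpos : 0 < E := Real.exp_pos _
  rw [div_le_div_iff₀ (by linarith) hSpos]
  calc 1 * ∑ r, Real.exp (βp * (N r : ℝ)) = ∑ r, Real.exp (βp * (N r : ℝ)) := one_mul _
    _ ≤ A * (1 + E) := hS
    _ = Real.exp (βp * (N z : ℝ)) * (1 + E) := by rw [hA]
end

section
/- Fix an integer d ≥ 2, Γ_0 ∈ [0,1], Γ_1 ≥ 0, and let (Y_i)_{i≥1} be i.i.d. random variables with values in the nonnegative integers, distributed as P(Y_i = k) = φ_k for k ≥ 1 and P(Y_i = 0) = 1 − ∑_{k≥1} φ_k, where φ_k = Γ_0 · k^{−2} · d^{−1000−Γ_1·k}. Then for all integers q ≥ 1 and k ≥ 1, P(∑_{i=1}^{q} Y_i = k) ≤ f_q · φ_k, where f_q = ∑_{i=0}^{q−1} (1 + 16·d^{−1000})^i. -/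
open MeasureTheory ProbabilityTheory

/-- `φ_k = Γ₀ · k⁻² · d^(−1000 − Γ₁ k)` (real power). -/
noncomputable def phi (d : ℕ) (Γ0 Γ1 : ℝ) (k : ℕ) : ℝ :=
  Γ0 * ((k : ℝ) ^ 2)⁻¹ * (d : ℝ) ^ (-1000 - Γ1 * (k : ℝ))

lemma phi_nonneg {d : ℕ} {Γ0 Γ1 : ℝ} (h0 : 0 ≤ Γ0) (k : ℕ) : 0 ≤ phi d Γ0 Γ1 k := by
  unfold phi
  positivity

lemma pointwise_inv_sq {a b : ℝ} (ha : 0 < a) (hb : 0 < b) :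
    (a ^ 2)⁻¹ * (b ^ 2)⁻¹ ≤ 4 * ((a + b) ^ 2)⁻¹ * ((a ^ 2)⁻¹ + (b ^ 2)⁻¹) := by
  have hab : 0 < a + b := by linarith
  have h1 : (a ^ 2)⁻¹ * (b ^ 2)⁻¹ = (a ^ 2 * b ^ 2)⁻¹ := by rw [mul_inv]
  have h2 : 4 * ((a + b) ^ 2)⁻¹ * ((a ^ 2)⁻¹ + (b ^ 2)⁻¹)
      = 4 * (a ^ 2 + b ^ 2) / ((a + b) ^ 2 * a ^ 2 * b ^ 2) := by
    field_simp; ring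
  rw [h1, h2, inv_eq_one_div, div_le_div_iff₀ (by positivity) (by positivity)]
  nlinarith [sq_nonneg (a - b), mul_pos ha hb, mul_pos (mul_pos ha hb) (mul_pos ha hb)]

lemma sum_inv_sq_le' (k : ℕ) : ∑ j ∈ Finset.Ico 1 k, ((j : ℝ) ^ 2)⁻¹ ≤ 2 := by
  have h := sum_Ioo_inv_sq_le (α := ℝ) 0 k
  rw [show Finset.Ico 1 k = Finset.Ioo 0 k from Finset.Ico_add_one_left_eq_Ioo 0 k]
  simpa using h

lemma sum_reflect (k : ℕ) (f : ℕ → ℝ) :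
    ∑ j ∈ Finset.Ico 1 k, f (k - j) = ∑ j ∈ Finset.Ico 1 k, f j := by
  apply Finset.sum_nbij' (fun j => k - j) (fun j => k - j) <;>
    intro a ha <;> simp only [Finset.mem_Ico] at * <;> omega

lemma conv_sq {k : ℕ} (hk : 1 ≤ k) :
    ∑ j ∈ Finset.Ico 1 k, ((j : ℝ) ^ 2)⁻¹ * (((k - j : ℕ) : ℝ) ^ 2)⁻¹
      ≤ 16 * ((k : ℝ) ^ 2)⁻¹ := by
  have step : ∑ j ∈ Finset.Ico 1 k, ((j : ℝ) ^ 2)⁻¹ * (((k - j : ℕ) : ℝ) ^ 2)⁻¹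
      ≤ ∑ j ∈ Finset.Ico 1 k,
        4 * (((k : ℝ)) ^ 2)⁻¹ * (((j : ℝ) ^ 2)⁻¹ + (((k - j : ℕ) : ℝ) ^ 2)⁻¹) := by
    apply Finset.sum_le_sum
    intro j hj
    simp only [Finset.mem_Ico] at hj
    have h1 : (0:ℝ) < j := by exact_mod_cast hj.1
    have h2 : (0:ℝ) < ((k - j : ℕ) : ℝ) := by
      have : 1 ≤ k - j := by omega
      exact_mod_cast Nat.lt_of_lt_of_le Nat.zero_lt_one this
    have hsum : (j : ℝ) + ((k - j : ℕ) : ℝ) = (k : ℝ) := by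
      have : j + (k - j) = k := by omega
      exact_mod_cast congrArg (Nat.cast : ℕ → ℝ) this
    calc ((j : ℝ) ^ 2)⁻¹ * (((k - j : ℕ) : ℝ) ^ 2)⁻¹
        ≤ 4 * (((j : ℝ) + ((k - j : ℕ) : ℝ)) ^ 2)⁻¹
            * (((j : ℝ) ^ 2)⁻¹ + (((k - j : ℕ) : ℝ) ^ 2)⁻¹) := pointwise_inv_sq h1 h2
      _ = 4 * (((k : ℝ)) ^ 2)⁻¹ * (((j : ℝ) ^ 2)⁻¹ + (((k - j : ℕ) : ℝ) ^ 2)⁻¹) := by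
          rw [hsum]
  refine step.trans ?_
  have hrefl := sum_reflect k (fun j => ((j : ℝ) ^ 2)⁻¹)
  rw [← Finset.mul_sum, Finset.sum_add_distrib, hrefl]
  have hs := sum_inv_sq_le' k
  have hknn : (0:ℝ) ≤ ((k : ℝ) ^ 2)⁻¹ := by positivity
  nlinarith [hs, hknn]

lemma phi_conv {d : ℕ} {Γ0 Γ1 : ℝ} (hd : 2 ≤ d) (hΓ0 : Γ0 ∈ Set.Icc (0:ℝ) 1)
    (hΓ1 : 0 ≤ Γ1) {k : ℕ} (hk : 1 ≤ k) :
    ∑ j ∈ Finset.Ico 1 k, phi d Γ0 Γ1 (k - j) * phi d Γ0 Γ1 j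
      ≤ 16 * (d : ℝ) ^ (-1000 : ℝ) * phi d Γ0 Γ1 k := by
  have hd0 : (0:ℝ) < (d:ℝ) := by exact_mod_cast (by omega : 0 < d)
  set D : ℝ := (d:ℝ) ^ (-2000 - Γ1 * (k:ℝ)) with hD
  have hDpos : 0 < D := Real.rpow_pos_of_pos hd0 _
  have hterm : ∀ j ∈ Finset.Ico 1 k,
      phi d Γ0 Γ1 (k - j) * phi d Γ0 Γ1 j
        = Γ0 ^ 2 * D * (((j:ℝ) ^ 2)⁻¹ * (((k - j : ℕ):ℝ) ^ 2)⁻¹) := by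
    intro j hj
    simp only [Finset.mem_Ico] at hj
    have hcast : ((k - j : ℕ):ℝ) = (k:ℝ) - (j:ℝ) := by
      rw [Nat.cast_sub hj.2.le]
    unfold phi
    rw [hD, show (-2000 - Γ1 * (k:ℝ))
        = (-1000 - Γ1 * ((k - j : ℕ):ℝ)) + (-1000 - Γ1 * (j:ℝ)) by rw [hcast]; ring,
      Real.rpow_add hd0]
    ring
  rw [Finset.sum_congr rfl hterm, ← Finset.mul_sum]
  have hmul : (d:ℝ) ^ (-1000:ℝ) * (d:ℝ) ^ (-1000 - Γ1 * (k:ℝ)) = D := by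
    rw [← Real.rpow_add hd0, hD]
    congr 1
    ring
  have hR : 16 * (d:ℝ) ^ (-1000:ℝ) * phi d Γ0 Γ1 k = Γ0 * D * (16 * ((k:ℝ) ^ 2)⁻¹) := by
    unfold phi
    rw [← hmul]
    ring
  rw [hR]
  have hΓ : Γ0 ^ 2 ≤ Γ0 := by nlinarith [hΓ0.1, hΓ0.2]
  calc Γ0 ^ 2 * D * ∑ j ∈ Finset.Ico 1 k, ((j:ℝ) ^ 2)⁻¹ * (((k - j : ℕ):ℝ) ^ 2)⁻¹
      ≤ Γ0 ^ 2 * D * (16 * ((k:ℝ) ^ 2)⁻¹) := by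
        apply mul_le_mul_of_nonneg_left (conv_sq hk)
        positivity
    _ ≤ Γ0 * D * (16 * ((k:ℝ) ^ 2)⁻¹) := by
        apply mul_le_mul_of_nonneg_right (mul_le_mul_of_nonneg_right hΓ hDpos.le)
        positivity

/-- If `(Y_i)` are i.i.d. nonnegative-integer random variables with `P(Y_i = k) = φ_k`
for `k ≥ 1` (and `P(Y_i = 0)` the remaining mass), then for all `q ≥ 1` and `k ≥ 1`,
`P(∑_{i<q} Y_i = k) ≤ f_q · φ_k` where `f_q = ∑_{i<q} (1 + 16 d^{-1000})^i`. -/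
theorem stmt_8 {Ω : Type*} [MeasurableSpace Ω] (μ : Measure Ω) [IsProbabilityMeasure μ]
    (d : ℕ) (hd : 2 ≤ d) (Γ0 Γ1 : ℝ)
    (hΓ0 : Γ0 ∈ Set.Icc (0 : ℝ) 1) (hΓ1 : 0 ≤ Γ1)
    (Y : ℕ → Ω → ℕ) (hmeas : ∀ i, Measurable (Y i))
    (hindep : iIndepFun Y μ)
    (hdist : ∀ i, ∀ k, 1 ≤ k → μ {ω | Y i ω = k} = ENNReal.ofReal (phi d Γ0 Γ1 k))
    (q k : ℕ) (hq : 1 ≤ q) (hk : 1 ≤ k) :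
    μ {ω | ∑ i ∈ Finset.range q, Y i ω = k}
      ≤ ENNReal.ofReal
          ((∑ i ∈ Finset.range q, (1 + 16 * (d : ℝ) ^ (-1000 : ℝ)) ^ i) * phi d Γ0 Γ1 k) := by
  have hΓ0' := hΓ0.1
  set c : ℝ := 1 + 16 * (d : ℝ) ^ (-1000 : ℝ) with hc
  have hcnn : (0:ℝ) ≤ c := by
    have : (0:ℝ) ≤ (d:ℝ) ^ (-1000:ℝ) := Real.rpow_nonneg (Nat.cast_nonneg d) _
    rw [hc]; linarith
  induction q, hq using Nat.le_induction generalizing k hk with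
  | base =>
      simp only [Finset.sum_range_one, pow_zero, one_mul]
      rw [hdist 0 k hk]
  | succ q hq IH =>
      set f : ℝ := ∑ i ∈ Finset.range q, c ^ i with hf
      have hfnn : 0 ≤ f := Finset.sum_nonneg fun i _ => pow_nonneg hcnn i
      have hfp : ∀ m : ℕ, (0:ℝ) ≤ f * phi d Γ0 Γ1 m :=
        fun m => mul_nonneg hfnn (phi_nonneg hΓ0' m)
      have hfpp : ∀ m n : ℕ, (0:ℝ) ≤ f * phi d Γ0 Γ1 m * phi d Γ0 Γ1 n :=
        fun m n => mul_nonneg (hfp m) (phi_nonneg hΓ0' n)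
      have msum : Measurable fun ω => ∑ i ∈ Finset.range q, Y i ω :=
        Finset.measurable_sum _ fun i _ => hmeas i
      -- decomposition of the event
      have hset : {ω | ∑ i ∈ Finset.range (q + 1), Y i ω = k}
          = ⋃ j ∈ Finset.range (k + 1),
              ((fun ω => ∑ i ∈ Finset.range q, Y i ω) ⁻¹' {k - j} ∩ Y q ⁻¹' {j}) := by
        ext ω
        simp only [Set.mem_setOf_eq, Set.mem_iUnion, Finset.mem_range, Set.mem_inter_iff,
          Set.mem_preimage, Set.mem_singleton_iff, Finset.sum_range_succ]
        constructor
        · intro h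
          exact ⟨Y q ω, by omega, by omega, rfl⟩
        · rintro ⟨j, hj, h1, h2⟩
          omega
      -- product formula via independence
      have hind : IndepFun (∑ i ∈ Finset.range q, Y i) (Y q) μ :=
        hindep.indepFun_finsetSum_of_notMem hmeas (by simp)
      have hprod : ∀ j, μ ((fun ω => ∑ i ∈ Finset.range q, Y i ω) ⁻¹' {k - j} ∩ Y q ⁻¹' {j})
          = μ {ω | ∑ i ∈ Finset.range q, Y i ω = k - j} * μ {ω | Y q ω = j} := by
        intro j
        have h := hind.measure_inter_preimage_eq_mul {k - j} {j}
          (measurableSet_singleton _) (measurableSet_singleton _)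
        have e1 : (∑ i ∈ Finset.range q, Y i) ⁻¹' {k - j}
            = (fun ω => ∑ i ∈ Finset.range q, Y i ω) ⁻¹' {k - j} := by
          ext ω; simp [Finset.sum_apply]
        have e2 : (fun ω => ∑ i ∈ Finset.range q, Y i ω) ⁻¹' {k - j}
            = {ω | ∑ i ∈ Finset.range q, Y i ω = k - j} := by
          ext ω; simp
        have e3 : Y q ⁻¹' {j} = {ω | Y q ω = j} := by ext ω; simp
        rw [e1, e2, e3] at h
        rw [e2, e3]
        exact h
      calc μ {ω | ∑ i ∈ Finset.range (q + 1), Y i ω = k}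
          ≤ ∑ j ∈ Finset.range (k + 1),
              μ ((fun ω => ∑ i ∈ Finset.range q, Y i ω) ⁻¹' {k - j} ∩ Y q ⁻¹' {j}) := by
            rw [hset]; exact measure_biUnion_finset_le _ _
        _ = ∑ j ∈ Finset.range (k + 1),
              μ {ω | ∑ i ∈ Finset.range q, Y i ω = k - j} * μ {ω | Y q ω = j} :=
            Finset.sum_congr rfl fun j _ => hprod j
        _ = μ {ω | ∑ i ∈ Finset.range q, Y i ω = k} * μ {ω | Y q ω = 0}
            + ∑ j ∈ Finset.Ico 1 k,
                μ {ω | ∑ i ∈ Finset.range q, Y i ω = k - j} * μ {ω | Y q ω = j}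
            + μ {ω | ∑ i ∈ Finset.range q, Y i ω = 0} * μ {ω | Y q ω = k} := by
            rw [Finset.sum_range_succ, Finset.range_eq_Ico,
              Finset.sum_eq_sum_Ico_succ_bot (by omega : 0 < k)]
            simp
        _ ≤ ENNReal.ofReal (f * phi d Γ0 Γ1 k) * 1
            + ∑ j ∈ Finset.Ico 1 k, ENNReal.ofReal (f * phi d Γ0 Γ1 (k - j) * phi d Γ0 Γ1 j)
            + 1 * ENNReal.ofReal (phi d Γ0 Γ1 k) := by
            gcongr ?_ + ?_ + ?_
            · exact mul_le_mul' (IH k hk) prob_le_one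
            · apply Finset.sum_le_sum
              intro j hj
              simp only [Finset.mem_Ico] at hj
              have hkj : 1 ≤ k - j := by omega
              rw [hdist q j hj.1, ENNReal.ofReal_mul (hfp _)]
              exact mul_le_mul' (IH (k - j) hkj) le_rfl
            · rw [hdist q k hk]
              exact mul_le_mul' prob_le_one le_rfl
        _ = ENNReal.ofReal (f * phi d Γ0 Γ1 k
              + (∑ j ∈ Finset.Ico 1 k, f * phi d Γ0 Γ1 (k - j) * phi d Γ0 Γ1 j)
              + phi d Γ0 Γ1 k) := by
            rw [mul_one, one_mul,
              ← ENNReal.ofReal_sum_of_nonneg (fun j _ => hfpp _ _),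
              ← ENNReal.ofReal_add (hfp _)
                (Finset.sum_nonneg fun j _ => hfpp _ _),
              ← ENNReal.ofReal_add (add_nonneg (hfp _)
                (Finset.sum_nonneg fun j _ => hfpp _ _)) (phi_nonneg hΓ0' k)]
        _ ≤ ENNReal.ofReal ((∑ i ∈ Finset.range (q + 1), c ^ i) * phi d Γ0 Γ1 k) := by
            apply ENNReal.ofReal_le_ofReal
            have h1 : ∑ j ∈ Finset.Ico 1 k, f * phi d Γ0 Γ1 (k - j) * phi d Γ0 Γ1 j
                = f * ∑ j ∈ Finset.Ico 1 k, phi d Γ0 Γ1 (k - j) * phi d Γ0 Γ1 j := by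
              rw [Finset.mul_sum]
              exact Finset.sum_congr rfl fun j _ => by ring
            have h2 : f * ∑ j ∈ Finset.Ico 1 k, phi d Γ0 Γ1 (k - j) * phi d Γ0 Γ1 j
                ≤ f * (16 * (d : ℝ) ^ (-1000 : ℝ) * phi d Γ0 Γ1 k) :=
              mul_le_mul_of_nonneg_left (phi_conv hd hΓ0 hΓ1 hk) hfnn
            rw [h1, geom_sum_succ, ← hf]
            have : (c * f + 1) * phi d Γ0 Γ1 k
                = f * phi d Γ0 Γ1 k + f * (16 * (d : ℝ) ^ (-1000 : ℝ) * phi d Γ0 Γ1 k)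
                  + phi d Γ0 Γ1 k := by rw [hc]; ring
            linarith
end

section
/- Fix an integer d ≥ 7 and let (Y_i)_{i≥1} be i.i.d. random variables on the nonnegative integers with P(Y_i = k) = ψ_k, where ψ_k = k^{−2}·d^{−1000−100k} for k ≥ 1 and ψ_0 = 1 − ∑_{k≥1} ψ_k. Then for every integer q with 1 ≤ q ≤ d and every integer k ≥ 1, P(∑_{i=1}^{q} Y_i ≥ k) ≤ √2 · q · ψ_k. -/
open MeasureTheory ProbabilityTheory
open scoped ENNReal

/-- `ψ_k = k⁻² · d^(−1000 − 100k)`. -/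
noncomputable def psi (d k : ℕ) : ℝ :=
  ((k : ℝ) ^ 2)⁻¹ * (d : ℝ) ^ (-(1000 + 100 * (k : ℤ)))

lemma psi_nonneg (d k : ℕ) : 0 ≤ psi d k := by unfold psi; positivity

lemma psi_add_le {d : ℕ} (hd : 7 ≤ d) (k j : ℕ) (hk : 1 ≤ k) :
    psi d (k + j) ≤ psi d k * (1/7) ^ j := by
  have hd0 : (1:ℝ) ≤ (d:ℝ) := by exact_mod_cast le_trans (by norm_num : (1:ℕ) ≤ 7) hd
  have hd7 : (7:ℝ) ≤ (d:ℝ) := by exact_mod_cast hd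
  have hdpos : (0:ℝ) < d := by linarith
  unfold psi
  push_cast
  have h1 : (((k:ℝ) + j) ^ 2)⁻¹ ≤ ((k:ℝ)^2)⁻¹ := by
    have hk1 : (1:ℝ) ≤ (k:ℝ) := by exact_mod_cast hk
    have hj0 : (0:ℝ) ≤ (j:ℝ) := by positivity
    exact inv_anti₀ (by positivity) (by nlinarith)
  have h2 : (d:ℝ) ^ (-(1000 + 100 * ((k:ℤ) + j))) =
      (d:ℝ) ^ (-(1000 + 100 * (k:ℤ))) * ((d:ℝ) ^ (-100:ℤ)) ^ j := by
    rw [← zpow_natCast ((d:ℝ) ^ (-100:ℤ)) j, ← zpow_mul, ← zpow_add₀ (by positivity : (d:ℝ) ≠ 0)]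
    ring_nf
  rw [h2]
  have h3 : ((d:ℝ) ^ (-100:ℤ)) ^ j ≤ (1/7:ℝ) ^ j := by
    apply pow_le_pow_left₀ (by positivity)
    rw [zpow_neg, ← one_div]
    apply div_le_div_of_nonneg_left (by norm_num) (by norm_num)
    calc (7:ℝ) ≤ (d:ℝ) := hd7
      _ = (d:ℝ)^(1:ℤ) := (zpow_one _).symm
      _ ≤ (d:ℝ)^(100:ℤ) := zpow_le_zpow_right₀ hd0 (by norm_num)
  have hz : (0:ℝ) ≤ (d:ℝ) ^ (-(1000 + 100 * (k:ℤ))) := by positivity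
  calc (((k:ℝ) + j) ^ 2)⁻¹ * ((d:ℝ) ^ (-(1000 + 100 * (k:ℤ))) * ((d:ℝ) ^ (-100:ℤ)) ^ j)
      ≤ ((k:ℝ)^2)⁻¹ * ((d:ℝ) ^ (-(1000 + 100 * (k:ℤ))) * (1/7:ℝ) ^ j) := by
        apply mul_le_mul h1 (by exact mul_le_mul_of_nonneg_left h3 hz) (by positivity)
          (by positivity)
    _ = ((k:ℝ)^2)⁻¹ * (d:ℝ) ^ (-(1000 + 100 * (k:ℤ))) * (1/7:ℝ) ^ j := by ring

lemma psi_mul_le {d : ℕ} (hd : 7 ≤ d) (j m : ℕ) (hj : 1 ≤ j) (hm : 1 ≤ m) :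
    psi d j * psi d m
      ≤ (2*((j:ℝ)^2)⁻¹ + 2*((m:ℝ)^2)⁻¹) * ((d:ℝ)^(-(1000:ℤ)) * psi d (j+m)) := by
  have hdpos : (0:ℝ) < d := by
    have : 0 < d := by omega
    exact_mod_cast this
  have hne : (d:ℝ) ≠ 0 := ne_of_gt hdpos
  have ha : (0:ℝ) < (j:ℝ) := by exact_mod_cast hj
  have hb : (0:ℝ) < (m:ℝ) := by exact_mod_cast hm
  unfold psi
  push_cast
  have hz : (d:ℝ)^(-(1000+100*(j:ℤ))) * (d:ℝ)^(-(1000+100*(m:ℤ)))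
      = (d:ℝ)^(-(1000:ℤ)) * (d:ℝ)^(-(1000+100*((j:ℤ)+(m:ℤ)))) := by
    rw [← zpow_add₀ hne, ← zpow_add₀ hne]
    ring_nf
  have hc : ((j:ℝ)^2)⁻¹ * ((m:ℝ)^2)⁻¹
      ≤ (2*((j:ℝ)^2)⁻¹ + 2*((m:ℝ)^2)⁻¹) * ((((j:ℝ)+(m:ℝ))^2)⁻¹) := by
    have hdiff : (2*((j:ℝ)^2)⁻¹ + 2*((m:ℝ)^2)⁻¹) * ((((j:ℝ)+(m:ℝ))^2)⁻¹)
        - ((j:ℝ)^2)⁻¹ * ((m:ℝ)^2)⁻¹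
        = ((j:ℝ)-(m:ℝ))^2 / ((j:ℝ)^2 * (m:ℝ)^2 * ((j:ℝ)+(m:ℝ))^2) := by
      field_simp
      ring
    nlinarith [div_nonneg (sq_nonneg ((j:ℝ)-(m:ℝ)))
      (le_of_lt (by positivity : (0:ℝ) < (j:ℝ)^2 * (m:ℝ)^2 * ((j:ℝ)+(m:ℝ))^2))]
  have hZ : (0:ℝ) ≤ (d:ℝ)^(-(1000:ℤ)) * (d:ℝ)^(-(1000+100*((j:ℤ)+(m:ℤ)))) := by positivity
  calc ((j:ℝ)^2)⁻¹ * (d:ℝ)^(-(1000+100*(j:ℤ))) * (((m:ℝ)^2)⁻¹ * (d:ℝ)^(-(1000+100*(m:ℤ))))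
      = ((j:ℝ)^2)⁻¹ * ((m:ℝ)^2)⁻¹ * ((d:ℝ)^(-(1000:ℤ)) * (d:ℝ)^(-(1000+100*((j:ℤ)+(m:ℤ))))) := by
        rw [← hz]; ring
    _ ≤ (2*((j:ℝ)^2)⁻¹ + 2*((m:ℝ)^2)⁻¹) * ((((j:ℝ)+(m:ℝ))^2)⁻¹)
        * ((d:ℝ)^(-(1000:ℤ)) * (d:ℝ)^(-(1000+100*((j:ℤ)+(m:ℤ))))) :=
        mul_le_mul_of_nonneg_right hc hZ
    _ = (2*((j:ℝ)^2)⁻¹ + 2*((m:ℝ)^2)⁻¹)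
        * ((d:ℝ)^(-(1000:ℤ)) * ((((j:ℝ)+(m:ℝ))^2)⁻¹ * (d:ℝ)^(-(1000+100*((j:ℤ)+(m:ℤ)))))) := by
        ring

lemma inv_sq_sum' (k : ℕ) (hk : 1 ≤ k) :
    ∑ j ∈ Finset.Ico 1 (k+1), ((j:ℝ)^2)⁻¹ ≤ 2 - (k:ℝ)⁻¹ := by
  induction k with
  | zero => omega
  | succ n ih =>
    rcases Nat.eq_zero_or_pos n with h0 | hn
    · subst h0; norm_num
    · rw [Finset.sum_Ico_succ_top (by omega)]
      have hn1 : (1:ℝ) ≤ (n:ℝ) := by exact_mod_cast hn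
      have key : (((n:ℝ)+1)^2)⁻¹ ≤ (n:ℝ)⁻¹ - ((n:ℝ)+1)⁻¹ := by
        have h2 : (n:ℝ)⁻¹ - ((n:ℝ)+1)⁻¹ = ((n:ℝ)*((n:ℝ)+1))⁻¹ := by field_simp; ring
        rw [h2]
        apply inv_anti₀ (by positivity)
        nlinarith
      have := ih hn
      push_cast
      nlinarith [this]

lemma inv_sq_sum (k : ℕ) : ∑ j ∈ Finset.Ico 1 k, ((j:ℝ)^2)⁻¹ ≤ 2 := by
  rcases Nat.eq_zero_or_pos k with h0 | hk
  · subst h0; norm_num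
  · have step1 : ∑ j ∈ Finset.Ico 1 k, ((j:ℝ)^2)⁻¹ ≤ ∑ j ∈ Finset.Ico 1 (k+1), ((j:ℝ)^2)⁻¹ :=
      Finset.sum_le_sum_of_subset_of_nonneg (Finset.Ico_subset_Ico le_rfl (by omega))
        (fun _ _ _ => by positivity)
    have h2 := inv_sq_sum' k hk
    have : (0:ℝ) ≤ (k:ℝ)⁻¹ := by positivity
    linarith

lemma conv_bound {d : ℕ} (hd : 7 ≤ d) (k : ℕ) :
    ∑ j ∈ Finset.Ico 1 k, psi d j * psi d (k - j)
      ≤ 8 * ((d:ℝ)^(-(1000:ℤ)) * psi d k) := by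
  have hC : (0:ℝ) ≤ (d:ℝ)^(-(1000:ℤ)) * psi d k := by
    have := psi_nonneg d k
    positivity
  have hterm : ∀ j ∈ Finset.Ico 1 k,
      psi d j * psi d (k - j)
        ≤ (2*((j:ℝ)^2)⁻¹ + 2*(((k-j:ℕ):ℝ)^2)⁻¹) * ((d:ℝ)^(-(1000:ℤ)) * psi d k) := by
    intro j hj
    rw [Finset.mem_Ico] at hj
    have h1 : j + (k - j) = k := by omega
    have := psi_mul_le hd j (k - j) hj.1 (by omega)
    rwa [h1] at this
  calc ∑ j ∈ Finset.Ico 1 k, psi d j * psi d (k - j)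
      ≤ ∑ j ∈ Finset.Ico 1 k,
          (2*((j:ℝ)^2)⁻¹ + 2*(((k-j:ℕ):ℝ)^2)⁻¹) * ((d:ℝ)^(-(1000:ℤ)) * psi d k) :=
        Finset.sum_le_sum hterm
    _ = (∑ j ∈ Finset.Ico 1 k, (2*((j:ℝ)^2)⁻¹ + 2*(((k-j:ℕ):ℝ)^2)⁻¹))
          * ((d:ℝ)^(-(1000:ℤ)) * psi d k) := by rw [← Finset.sum_mul]
    _ ≤ 8 * ((d:ℝ)^(-(1000:ℤ)) * psi d k) := by
        apply mul_le_mul_of_nonneg_right _ hC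
        rw [Finset.sum_add_distrib, ← Finset.mul_sum, ← Finset.mul_sum]
        have hrefl : ∑ j ∈ Finset.Ico 1 k, (((k-j:ℕ):ℝ)^2)⁻¹
            = ∑ j ∈ Finset.Ico 1 k, ((j:ℝ)^2)⁻¹ := by
          have := Finset.sum_Ico_reflect (fun j => ((j:ℝ)^2)⁻¹) 1 (m := k) (n := k) (by omega)
          simpa using this
        rw [hrefl]
        have := inv_sq_sum k
        linarith

lemma tail_le {Ω : Type*} [MeasurableSpace Ω] (μ : Measure Ω) [IsProbabilityMeasure μ]
    {d : ℕ} (hd : 7 ≤ d) (Z : Ω → ℕ) (hZ : Measurable Z)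
    (hdist : ∀ k, 1 ≤ k → μ {ω | Z ω = k} = ENNReal.ofReal (psi d k))
    (k : ℕ) (hk : 1 ≤ k) :
    μ {ω | k ≤ Z ω} ≤ ENNReal.ofReal (7/6 * psi d k) := by
  have hset : {ω | k ≤ Z ω} = ⋃ j, {ω | Z ω = k + j} := by
    ext ω; simp [le_iff_exists_add]
  have hdisj : Pairwise (Function.onFun Disjoint (fun j => {ω | Z ω = k + j})) := by
    intro i j hij
    simp only [Function.onFun, Set.disjoint_left, Set.mem_setOf_eq]
    intro ω h1 h2
    omega
  have hms : ∀ j, MeasurableSet {ω | Z ω = k + j} := fun j =>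
    hZ (measurableSet_singleton (k + j))
  rw [hset, measure_iUnion hdisj hms]
  have hgeo : (1 - ENNReal.ofReal (1/7))⁻¹ ≤ ENNReal.ofReal (7/6) := by
    have h1 : (1 : ℝ≥0∞) - ENNReal.ofReal (1/7) = ENNReal.ofReal (6/7) := by
      rw [← ENNReal.ofReal_one, ← ENNReal.ofReal_sub _ (by norm_num)]
      norm_num
    rw [h1, ← ENNReal.ofReal_inv_of_pos (by norm_num)]
    norm_num
  calc ∑' j, μ {ω | Z ω = k + j}
      = ∑' j : ℕ, ENNReal.ofReal (psi d (k + j)) := by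
        congr 1; funext j; exact hdist (k + j) (by omega)
    _ ≤ ∑' j : ℕ, ENNReal.ofReal (psi d k) * (ENNReal.ofReal (1/7)) ^ j := by
        apply ENNReal.tsum_le_tsum
        intro j
        rw [← ENNReal.ofReal_pow (by norm_num), ← ENNReal.ofReal_mul (psi_nonneg d k)]
        exact ENNReal.ofReal_le_ofReal (psi_add_le hd k j hk)
    _ = ENNReal.ofReal (psi d k) * (1 - ENNReal.ofReal (1/7))⁻¹ := by
        rw [ENNReal.tsum_mul_left, ENNReal.tsum_geometric]
    _ ≤ ENNReal.ofReal (psi d k) * ENNReal.ofReal (7/6) :=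
        mul_le_mul_right hgeo _
    _ = ENNReal.ofReal (7/6 * psi d k) := by
        rw [← ENNReal.ofReal_mul (psi_nonneg d k), mul_comm]

/-- If `(Y_i)` are i.i.d. with `P(Y_i = k) = ψ_k` for `k ≥ 1`, then for `1 ≤ q ≤ d`
and `k ≥ 1`, `P(∑_{i<q} Y_i ≥ k) ≤ √2 · q · ψ_k`. -/
theorem stmt_13 {Ω : Type*} [MeasurableSpace Ω] (μ : Measure Ω) [IsProbabilityMeasure μ]
    (d : ℕ) (hd : 7 ≤ d)
    (Y : ℕ → Ω → ℕ) (hmeas : ∀ i, Measurable (Y i))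
    (hindep : iIndepFun Y μ)
    (hdist : ∀ i k, 1 ≤ k → μ {ω | Y i ω = k} = ENNReal.ofReal (psi d k))
    (q k : ℕ) (hq1 : 1 ≤ q) (hqd : q ≤ d) (hk : 1 ≤ k) :
    μ {ω | k ≤ ∑ i ∈ Finset.range q, Y i ω}
      ≤ ENNReal.ofReal (Real.sqrt 2 * q * psi d k) := by
  -- numeric facts about √2
  have hs_lb : (1.4:ℝ) ≤ Real.sqrt 2 := by
    have := Real.sqrt_le_sqrt (show (1.4:ℝ)^2 ≤ 2 by norm_num)
    rwa [Real.sqrt_sq (by norm_num)] at this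
  have hs_ub : Real.sqrt 2 ≤ 1.5 := by
    have := Real.sqrt_le_sqrt (show (2:ℝ) ≤ 1.5^2 by norm_num)
    rwa [Real.sqrt_sq (by norm_num)] at this
  have htail : ∀ (i m : ℕ), 1 ≤ m → μ {ω | m ≤ Y i ω} ≤ ENNReal.ofReal (7/6 * psi d m) :=
    fun i m hm => tail_le μ hd (Y i) (hmeas i) (fun k' hk' => hdist i k' hk') m hm
  have key : ∀ q : ℕ, 1 ≤ q → q ≤ d → ∀ k : ℕ, 1 ≤ k →
      μ {ω | k ≤ ∑ i ∈ Finset.range q, Y i ω}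
        ≤ ENNReal.ofReal (Real.sqrt 2 * q * psi d k) := by
    intro q
    induction q with
    | zero => omega
    | succ n IH =>
      intro _ hqd' k' hk'
      rcases Nat.eq_zero_or_pos n with h0 | hn
      · -- base case q = 1
        subst h0
        have hψ := psi_nonneg d k'
        have h1 : {ω | k' ≤ ∑ i ∈ Finset.range 1, Y i ω} = {ω | k' ≤ Y 0 ω} := by
          simp [Finset.sum_range_one]
        rw [h1]
        refine le_trans (htail 0 k' hk') (ENNReal.ofReal_le_ofReal ?_)
        push_cast
        nlinarith
      · -- inductive step
        set S : Ω → ℕ := fun ω => ∑ i ∈ Finset.range n, Y i ω with hS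
        have hSmeas : Measurable S := Finset.measurable_sum _ (fun i _ => hmeas i)
        have hfun : S = ∑ j ∈ Finset.range n, Y j := by
          funext ω; simp [hS, Finset.sum_apply]
        have hind : IndepFun S (Y n) μ := by
          rw [hfun]; exact hindep.indepFun_sum_range_succ hmeas n
        have IHn := IH hn (by omega)
        set E0 : Set Ω := {ω | Y n ω = 0} ∩ {ω | k' ≤ S ω} with hE0
        set Emid : Set Ω := ⋃ j ∈ Finset.Ico 1 k', ({ω | k' - j ≤ S ω} ∩ {ω | Y n ω = j})
          with hEmid
        set Etail : Set Ω := {ω | k' ≤ Y n ω} with hEtail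
        have hsub : {ω | k' ≤ ∑ i ∈ Finset.range (n+1), Y i ω} ⊆ (E0 ∪ Emid) ∪ Etail := by
          intro ω hω
          simp only [Set.mem_setOf_eq, Finset.sum_range_succ] at hω
          by_cases h1 : k' ≤ Y n ω
          · exact Or.inr h1
          · push_neg at h1
            by_cases h00 : Y n ω = 0
            · exact Or.inl (Or.inl ⟨h00, by simp only [Set.mem_setOf_eq, hS]; omega⟩)
            · refine Or.inl (Or.inr ?_)
              refine Set.mem_biUnion (Finset.mem_Ico.mpr ⟨by omega, h1⟩) ?_
              exact ⟨by simp only [Set.mem_setOf_eq, hS]; omega, rfl⟩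
        have hmid_term : ∀ j ∈ Finset.Ico 1 k',
            μ ({ω | k' - j ≤ S ω} ∩ {ω | Y n ω = j})
              ≤ ENNReal.ofReal (Real.sqrt 2 * n * (psi d j * psi d (k' - j))) := by
          intro j hj
          rw [Finset.mem_Ico] at hj
          have hprod : μ ({ω | k' - j ≤ S ω} ∩ {ω | Y n ω = j})
              = μ {ω | k' - j ≤ S ω} * μ {ω | Y n ω = j} :=
            hind.measure_inter_preimage_eq_mul (Set.Ici (k' - j)) {j}
              measurableSet_Ici (measurableSet_singleton j)
          rw [hprod, hdist n j hj.1]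
          calc μ {ω | k' - j ≤ S ω} * ENNReal.ofReal (psi d j)
              ≤ ENNReal.ofReal (Real.sqrt 2 * n * psi d (k' - j)) * ENNReal.ofReal (psi d j) :=
                mul_le_mul_left (IHn (k' - j) (by omega)) _
            _ = ENNReal.ofReal (Real.sqrt 2 * n * (psi d j * psi d (k' - j))) := by
                rw [← ENNReal.ofReal_mul
                  (mul_nonneg (by positivity) (psi_nonneg d (k' - j)))]
                ring_nf
        have hmid : μ Emid ≤ ENNReal.ofReal (Real.sqrt 2 * n *
            (8 * ((d:ℝ)^(-(1000:ℤ)) * psi d k'))) := by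
          calc μ Emid ≤ ∑ j ∈ Finset.Ico 1 k', μ ({ω | k' - j ≤ S ω} ∩ {ω | Y n ω = j}) :=
              measure_biUnion_finset_le _ _
            _ ≤ ∑ j ∈ Finset.Ico 1 k',
                ENNReal.ofReal (Real.sqrt 2 * n * (psi d j * psi d (k' - j))) :=
              Finset.sum_le_sum hmid_term
            _ = ENNReal.ofReal (∑ j ∈ Finset.Ico 1 k',
                Real.sqrt 2 * n * (psi d j * psi d (k' - j))) := by
              rw [ENNReal.ofReal_sum_of_nonneg]
              intro j _
              have := psi_nonneg d j
              have := psi_nonneg d (k' - j)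
              positivity
            _ ≤ ENNReal.ofReal (Real.sqrt 2 * n * (8 * ((d:ℝ)^(-(1000:ℤ)) * psi d k'))) := by
              apply ENNReal.ofReal_le_ofReal
              rw [← Finset.mul_sum]
              apply mul_le_mul_of_nonneg_left (conv_bound hd k') (by positivity)
        have hE0' : μ E0 ≤ ENNReal.ofReal (Real.sqrt 2 * n * psi d k') :=
          le_trans (measure_mono Set.inter_subset_right) (IHn k' hk')
        have htail' : μ Etail ≤ ENNReal.ofReal (7/6 * psi d k') := htail n k' hk'
        -- numeric combination
        have hψ := psi_nonneg d k'
        have hn_le : (n:ℝ) ≤ (d:ℝ) := by exact_mod_cast le_trans (Nat.le_succ n) hqd'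
        have hd1 : (1:ℝ) ≤ (d:ℝ) := by exact_mod_cast le_trans (by norm_num : (1:ℕ) ≤ 7) hd
        have hd7 : (7:ℝ) ≤ (d:ℝ) := by exact_mod_cast hd
        have hD : (0:ℝ) ≤ (d:ℝ)^(-(1000:ℤ)) := by positivity
        have hnD : (n:ℝ) * (d:ℝ)^(-(1000:ℤ)) ≤ 1/343 := by
          have h999 : (343:ℝ) ≤ (d:ℝ)^(999:ℕ) := by
            calc (343:ℝ) = 7^3 := by norm_num
              _ ≤ (d:ℝ)^3 := pow_le_pow_left₀ (by norm_num) hd7 3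
              _ ≤ (d:ℝ)^(999:ℕ) := pow_le_pow_right₀ hd1 (by norm_num)
          have hd999 : (d:ℝ)^(-(999:ℤ)) ≤ 1/343 := by
            have e : (d:ℝ)^(-(999:ℤ)) = ((d:ℝ)^(999:ℕ))⁻¹ := by
              rw [zpow_neg]; norm_cast
            rw [e]
            have := inv_anti₀ (show (0:ℝ) < 343 by norm_num) h999
            rw [show ((343:ℝ))⁻¹ = 1/343 by norm_num] at this
            exact this
          calc (n:ℝ) * (d:ℝ)^(-(1000:ℤ)) ≤ (d:ℝ) * (d:ℝ)^(-(1000:ℤ)) :=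
              mul_le_mul_of_nonneg_right hn_le hD
            _ = (d:ℝ)^(-(999:ℤ)) := by
              have hne : (d:ℝ) ≠ 0 := by positivity
              calc (d:ℝ) * (d:ℝ)^(-(1000:ℤ)) = (d:ℝ)^(1:ℤ) * (d:ℝ)^(-(1000:ℤ)) := by
                    rw [zpow_one]
                _ = (d:ℝ)^((1:ℤ) + -1000) := (zpow_add₀ hne 1 (-1000)).symm
                _ = (d:ℝ)^(-(999:ℤ)) := by norm_num
            _ ≤ 1/343 := hd999
        have hnum : Real.sqrt 2 * n * psi d k'
            + (Real.sqrt 2 * n * (8 * ((d:ℝ)^(-(1000:ℤ)) * psi d k')) + 7/6 * psi d k')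
            ≤ Real.sqrt 2 * (n + 1) * psi d k' := by
          have h8 : Real.sqrt 2 * ((n:ℝ) * (d:ℝ)^(-(1000:ℤ))) ≤ 1.5 * (1/343) :=
            mul_le_mul hs_ub hnD (by positivity) (by norm_num)
          nlinarith [mul_le_mul_of_nonneg_right h8 hψ,
            mul_le_mul_of_nonneg_right hs_lb hψ]
        calc μ {ω | k' ≤ ∑ i ∈ Finset.range (n+1), Y i ω}
            ≤ μ ((E0 ∪ Emid) ∪ Etail) := measure_mono hsub
          _ ≤ μ (E0 ∪ Emid) + μ Etail := measure_union_le _ _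
          _ ≤ (μ E0 + μ Emid) + μ Etail := add_le_add (measure_union_le _ _) le_rfl
          _ ≤ (ENNReal.ofReal (Real.sqrt 2 * n * psi d k')
                + ENNReal.ofReal (Real.sqrt 2 * n * (8 * ((d:ℝ)^(-(1000:ℤ)) * psi d k'))))
                + ENNReal.ofReal (7/6 * psi d k') :=
              add_le_add (add_le_add hE0' hmid) htail'
          _ = ENNReal.ofReal (Real.sqrt 2 * n * psi d k'
                + (Real.sqrt 2 * n * (8 * ((d:ℝ)^(-(1000:ℤ)) * psi d k')) + 7/6 * psi d k')) := by
              rw [← ENNReal.ofReal_add (by positivity) (by positivity),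
                ← ENNReal.ofReal_add (by positivity) (by positivity)]
              ring_nf
          _ ≤ ENNReal.ofReal (Real.sqrt 2 * (n+1) * psi d k') :=
              ENNReal.ofReal_le_ofReal hnum
          _ = ENNReal.ofReal (Real.sqrt 2 * ((n:ℕ)+1 : ℕ) * psi d k') := by push_cast; ring_nf
  exact key q hq1 hqd k hk
end

section
/- Fix an integer d ≥ 7 and let Z_i = (Y_i, Y_i'), i = 1,...,q, be i.i.d. pairs where Y_i and Y_i' are independent, each distributed according to the probability mass function ψ (ψ_k = k^{−2}·d^{−1000−100k} for k ≥ 1, ψ_0 = 1 − ∑_{k≥1}ψ_k). Then for every 1 ≤ q ≤ d and all integers k, ℓ ≥ 0, P(∑_{i=1}^{q} Y_i ≥ k and ∑_{i=1}^{q} Y_i' ≥ ℓ) ≤ 2·q²·ψ_k·ψ_ℓ, where ψ_k is interpreted as 1 when k = 0. -/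
open MeasureTheory ProbabilityTheory

/-- `ψ_k = k⁻² · d^(−1000 − 100k)` for `k ≥ 1`, with the convention `ψ_0 = 1` used in
two-dimensional tail bounds. -/
noncomputable def psi' (d k : ℕ) : ℝ :=
  if k = 0 then 1 else ((k : ℝ) ^ 2)⁻¹ * (d : ℝ) ^ (-(1000 + 100 * (k : ℤ)))


namespace Stmt14Aux

lemma psi'_nonneg (d k : ℕ) : 0 ≤ psi' d k := by
  unfold psi'; split
  · norm_num
  · positivity

lemma psi'_eq (d : ℕ) {k : ℕ} (hk : 1 ≤ k) :
    psi' d k = ((k : ℝ) ^ 2)⁻¹ * (d : ℝ) ^ (-(1000 + 100 * (k : ℤ))) := by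
  unfold psi'; rw [if_neg (by omega)]

lemma dpow_le (d : ℕ) (hd : 7 ≤ d) {a b : ℤ} (hab : a ≤ b) :
    (d:ℝ) ^ a ≤ (d:ℝ) ^ b :=
  zpow_le_zpow_right₀ (by exact_mod_cast by omega : (1:ℝ) ≤ d) hab

lemma dpow_small (d : ℕ) (hd : 7 ≤ d) {a : ℤ} (ha : a ≤ -4) : (d:ℝ) ^ a ≤ 1/1000 := by
  have h2 : (7:ℝ) ≤ d := by exact_mod_cast hd
  have e : (d:ℝ) ^ (-4:ℤ) = ((d:ℝ) ^ (4:ℕ))⁻¹ := by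
    rw [zpow_neg]; norm_cast
  calc (d:ℝ) ^ a ≤ (d:ℝ) ^ (-4:ℤ) := dpow_le d hd ha
    _ = ((d:ℝ) ^ (4:ℕ))⁻¹ := e
    _ ≤ ((7:ℝ) ^ (4:ℕ))⁻¹ := by
        apply inv_anti₀ (by positivity)
        exact pow_le_pow_left₀ (by norm_num) h2 4
    _ ≤ 1/1000 := by norm_num

lemma psi'_succ_le (d : ℕ) (hd : 7 ≤ d) (j : ℕ) (hj : 1 ≤ j) :
    psi' d (j + 1) ≤ psi' d j * (1/1000) := by
  have hd0 : (0:ℝ) < d := lt_of_lt_of_le (by norm_num) (by exact_mod_cast hd : (7:ℝ) ≤ d)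
  rw [psi'_eq d hj, psi'_eq d (by omega : 1 ≤ j + 1)]
  have hsplit : (-(1000 + 100 * ((j:ℤ) + 1))) = (-(1000 + 100 * (j:ℤ))) + (-100) := by ring
  push_cast
  rw [hsplit, zpow_add₀ (ne_of_gt hd0)]
  have h1 : (((j:ℝ) + 1) ^ 2)⁻¹ ≤ (((j:ℝ)) ^ 2)⁻¹ := by
    apply inv_anti₀ (by positivity)
    have : (1:ℝ) ≤ j := by exact_mod_cast hj
    nlinarith
  have h2 : (d:ℝ) ^ (-100:ℤ) ≤ 1/1000 := dpow_small d hd (by norm_num)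
  have h3 : (0:ℝ) ≤ (d:ℝ) ^ (-(1000 + 100 * (j:ℤ))) := le_of_lt (zpow_pos hd0 _)
  have h4 : (0:ℝ) ≤ (((j:ℝ)) ^ 2)⁻¹ := by positivity
  calc (((j:ℝ) + 1) ^ 2)⁻¹ * ((d:ℝ) ^ (-(1000 + 100 * (j:ℤ))) * (d:ℝ) ^ (-100:ℤ))
      ≤ (((j:ℝ)) ^ 2)⁻¹ * ((d:ℝ) ^ (-(1000 + 100 * (j:ℤ))) * (1/1000)) := by
        apply mul_le_mul h1 _ (by positivity) h4
        exact mul_le_mul_of_nonneg_left h2 h3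
    _ = (((j:ℝ)) ^ 2)⁻¹ * (d:ℝ) ^ (-(1000 + 100 * (j:ℤ))) * (1/1000) := by ring

lemma psi'_add_le (d : ℕ) (hd : 7 ≤ d) (k : ℕ) (hk : 1 ≤ k) (m : ℕ) :
    psi' d (k + m) ≤ psi' d k * (1/1000) ^ m := by
  induction m with
  | zero => simp
  | succ n ih =>
      calc psi' d (k + (n+1)) = psi' d ((k + n) + 1) := by ring_nf
        _ ≤ psi' d (k + n) * (1/1000) := psi'_succ_le d hd _ (by omega)
        _ ≤ psi' d k * (1/1000) ^ n * (1/1000) := by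
            apply mul_le_mul_of_nonneg_right ih (by norm_num)
        _ = psi' d k * (1/1000) ^ (n+1) := by ring

lemma tail_one {Ω : Type*} [MeasurableSpace Ω] (μ : Measure Ω)
    (d : ℕ) (hd : 7 ≤ d) (Y : Ω → ℕ) (hm : Measurable Y)
    (hdist : ∀ k, 1 ≤ k → μ {ω | Y ω = k} = ENNReal.ofReal (psi' d k))
    (k : ℕ) (hk : 1 ≤ k) :
    μ {ω | k ≤ Y ω} ≤ ENNReal.ofReal ((1000/999) * psi' d k) := by
  have hset : {ω | k ≤ Y ω} = ⋃ m, {ω | Y ω = k + m} := by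
    ext ω; simp only [Set.mem_setOf_eq, Set.mem_iUnion]
    constructor
    · intro h; exact ⟨Y ω - k, by omega⟩
    · rintro ⟨m, hm⟩; omega
  have hmeasf : ∀ m : ℕ, MeasurableSet {ω | Y ω = k + m} := fun m =>
    hm (measurableSet_singleton (k + m))
  have hdisj : Pairwise (Function.onFun Disjoint fun m => {ω | Y ω = k + m}) := by
    intro a b hab
    simp only [Function.onFun, Set.disjoint_left, Set.mem_setOf_eq]
    intro ω h1 h2; omega
  rw [hset, measure_iUnion hdisj hmeasf]
  have heq : ∀ m : ℕ, μ {ω | Y ω = k + m} = ENNReal.ofReal (psi' d (k + m)) := fun m =>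
    hdist (k + m) (by omega)
  simp_rw [heq]
  have hsum : Summable (fun m : ℕ => psi' d k * (1/1000) ^ m) :=
    (summable_geometric_of_lt_one (by norm_num) (by norm_num)).mul_left _
  calc ∑' m, ENNReal.ofReal (psi' d (k + m))
      ≤ ∑' m, ENNReal.ofReal (psi' d k * (1/1000) ^ m) :=
        ENNReal.tsum_le_tsum fun m => ENNReal.ofReal_le_ofReal (psi'_add_le d hd k hk m)
    _ = ENNReal.ofReal (∑' m, psi' d k * (1/1000) ^ m) := by
        rw [ENNReal.ofReal_tsum_of_nonneg
          (fun m => mul_nonneg (psi'_nonneg d k) (by positivity)) hsum]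
    _ = ENNReal.ofReal (psi' d k * (1 - 1/1000)⁻¹) := by
        rw [tsum_mul_left, tsum_geometric_of_lt_one (by norm_num) (by norm_num)]
    _ = ENNReal.ofReal ((1000/999) * psi' d k) := by norm_num [mul_comm]

lemma key_frac {A B : ℝ} (hA : 0 < A) (hB : 0 < B) :
    (A^2)⁻¹ * (B^2)⁻¹ ≤ (2*(A^2)⁻¹ + 2*(B^2)⁻¹) * ((A+B)^2)⁻¹ := by
  rw [← sub_nonneg]
  have e : (2*(A^2)⁻¹ + 2*(B^2)⁻¹) * ((A+B)^2)⁻¹ - (A^2)⁻¹ * (B^2)⁻¹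
      = (A - B)^2 / (A^2 * B^2 * (A+B)^2) := by
    field_simp
    ring
  rw [e]
  positivity

lemma conv_term (d : ℕ) (hd : 7 ≤ d) {j k : ℕ} (hj : 1 ≤ j) (hjk : j < k) :
    psi' d j * psi' d (k - j) ≤
      (2*((j:ℝ)^2)⁻¹ + 2*(((k - j : ℕ):ℝ)^2)⁻¹) * ((d:ℝ)^(-1000:ℤ) * psi' d k) := by
  have hd0 : (0:ℝ) < d := lt_of_lt_of_le (by norm_num) (by exact_mod_cast hd : (7:ℝ) ≤ d)
  have hb : 1 ≤ k - j := by omega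
  rw [psi'_eq d hj, psi'_eq d hb, psi'_eq d (by omega : 1 ≤ k)]
  have hA : (0:ℝ) < (j:ℝ) := by exact_mod_cast hj
  have hB : (0:ℝ) < ((k - j : ℕ):ℝ) := by exact_mod_cast hb
  have hcast : ((k:ℝ)) = (j:ℝ) + ((k - j : ℕ):ℝ) := by
    push_cast [Nat.cast_sub (le_of_lt hjk)]; ring
  have hexp : (d:ℝ) ^ (-(1000 + 100 * (j:ℤ))) * (d:ℝ) ^ (-(1000 + 100 * ((k - j : ℕ):ℤ)))
      = (d:ℝ) ^ (-1000:ℤ) * (d:ℝ) ^ (-(1000 + 100 * (k:ℤ))) := by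
    rw [← zpow_add₀ (ne_of_gt hd0), ← zpow_add₀ (ne_of_gt hd0)]
    congr 1
    have : ((k - j : ℕ):ℤ) = (k:ℤ) - (j:ℤ) := by
      push_cast [Nat.cast_sub (le_of_lt hjk)]; ring
    rw [this]; ring
  have hfrac := key_frac hA hB
  rw [← hcast] at hfrac
  have hD : (0:ℝ) ≤ (d:ℝ) ^ (-1000:ℤ) * (d:ℝ) ^ (-(1000 + 100 * (k:ℤ))) := by positivity
  calc ((j:ℝ)^2)⁻¹ * (d:ℝ) ^ (-(1000 + 100 * (j:ℤ)))
        * (((((k - j : ℕ):ℝ))^2)⁻¹ * (d:ℝ) ^ (-(1000 + 100 * ((k - j : ℕ):ℤ))))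
      = ((j:ℝ)^2)⁻¹ * ((((k - j : ℕ):ℝ))^2)⁻¹
        * ((d:ℝ) ^ (-1000:ℤ) * (d:ℝ) ^ (-(1000 + 100 * (k:ℤ)))) := by
        rw [← hexp]; ring
    _ ≤ (2*((j:ℝ)^2)⁻¹ + 2*(((k - j : ℕ):ℝ)^2)⁻¹) * ((k:ℝ)^2)⁻¹
        * ((d:ℝ) ^ (-1000:ℤ) * (d:ℝ) ^ (-(1000 + 100 * (k:ℤ)))) :=
        mul_le_mul_of_nonneg_right hfrac hD
    _ = (2*((j:ℝ)^2)⁻¹ + 2*(((k - j : ℕ):ℝ)^2)⁻¹)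
        * ((d:ℝ)^(-1000:ℤ) * (((k:ℝ)^2)⁻¹ * (d:ℝ) ^ (-(1000 + 100 * (k:ℤ))))) := by ring

lemma inv_sq_sum_le (k : ℕ) : ∑ j ∈ Finset.Ico 1 k, ((j:ℝ)^2)⁻¹ ≤ 2 := by
  have h := sum_Ioo_inv_sq_le (α := ℝ) 0 k
  rw [show Finset.Ioo 0 k = Finset.Ico 1 k from rfl] at h
  calc ∑ j ∈ Finset.Ico 1 k, ((j:ℝ)^2)⁻¹ ≤ 2 / ((0:ℕ) + 1) := h
    _ = 2 := by norm_num

lemma inv_sq_sum_rev_le (k : ℕ) :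
    ∑ j ∈ Finset.Ico 1 k, (((k - j : ℕ):ℝ)^2)⁻¹ ≤ 2 := by
  have : ∑ j ∈ Finset.Ico 1 k, (((k - j : ℕ):ℝ)^2)⁻¹
      = ∑ j ∈ Finset.Ico 1 k, ((j:ℝ)^2)⁻¹ := by
    apply Finset.sum_nbij' (fun j => k - j) (fun j => k - j)
    all_goals intro a ha <;> simp only [Finset.mem_Ico] at * <;> try omega
  rw [this]; exact inv_sq_sum_le k

lemma conv_le (d : ℕ) (hd : 7 ≤ d) (k : ℕ) :
    ∑ j ∈ Finset.Ico 1 k, psi' d j * psi' d (k - j)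
      ≤ 8 * ((d:ℝ)^(-1000:ℤ) * psi' d k) := by
  have hd0 : (0:ℝ) < d := lt_of_lt_of_le (by norm_num) (by exact_mod_cast hd : (7:ℝ) ≤ d)
  have hC : (0:ℝ) ≤ (d:ℝ)^(-1000:ℤ) * psi' d k :=
    mul_nonneg (le_of_lt (zpow_pos hd0 _)) (psi'_nonneg d k)
  calc ∑ j ∈ Finset.Ico 1 k, psi' d j * psi' d (k - j)
      ≤ ∑ j ∈ Finset.Ico 1 k,
          (2*((j:ℝ)^2)⁻¹ + 2*(((k - j : ℕ):ℝ)^2)⁻¹) * ((d:ℝ)^(-1000:ℤ) * psi' d k) := by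
        apply Finset.sum_le_sum
        intro j hj
        simp only [Finset.mem_Ico] at hj
        exact conv_term d hd hj.1 hj.2
    _ = (∑ j ∈ Finset.Ico 1 k, (2*((j:ℝ)^2)⁻¹ + 2*(((k - j : ℕ):ℝ)^2)⁻¹))
          * ((d:ℝ)^(-1000:ℤ) * psi' d k) := by rw [Finset.sum_mul]
    _ ≤ 8 * ((d:ℝ)^(-1000:ℤ) * psi' d k) := by
        apply mul_le_mul_of_nonneg_right _ hC
        rw [Finset.sum_add_distrib, ← Finset.mul_sum, ← Finset.mul_sum]
        have h1 := inv_sq_sum_le k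
        have h2 := inv_sq_sum_rev_le k
        linarith

section Main

variable {Ω : Type*} [MeasurableSpace Ω] (μ : Measure Ω) [IsProbabilityMeasure μ]
    (d : ℕ) (W : ℕ × Bool → Ω → ℕ)

lemma indep_sum_last (hmeas : ∀ p, Measurable (W p))
    (hindep : iIndepFun W μ) (q : ℕ) (b : Bool) :
    IndepFun (fun ω => ∑ i ∈ Finset.range q, W (i, b) ω) (W (q, b)) μ := by
  have h := hindep.indepFun_finsetSum_of_notMem hmeas
    (s := (Finset.range q).image (fun i => (i, b))) (i := (q, b))
    (by simp)
  have e : (∑ j ∈ (Finset.range q).image (fun i => (i, b)), W j)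
      = fun ω => ∑ i ∈ Finset.range q, W (i, b) ω := by
    funext ω
    rw [Finset.sum_apply]
    rw [Finset.sum_image (by intro a _ c _ h; simpa using h)]
  rwa [e] at h

lemma indep_two_sums (hmeas : ∀ p, Measurable (W p))
    (hindep : iIndepFun W μ) (q : ℕ) :
    IndepFun (fun ω => ∑ i ∈ Finset.range q, W (i, false) ω)
             (fun ω => ∑ i ∈ Finset.range q, W (i, true) ω) μ := by
  classical
  set S : Finset (ℕ × Bool) := (Finset.range q).image (fun i => (i, false)) with hS
  set T : Finset (ℕ × Bool) := (Finset.range q).image (fun i => (i, true)) with hT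
  have hdisj : Disjoint S T := by
    rw [Finset.disjoint_left]
    rintro ⟨a, c⟩ haS haT
    simp [hS, hT] at haS haT
    obtain ⟨x, hx, hxa, hc⟩ := haS
    obtain ⟨y, hy, hya, hc'⟩ := haT
  have h := hindep.indepFun_finset S T hdisj hmeas
  have h2 := h.comp (φ := fun v : ({x // x ∈ S} → ℕ) => ∑ i, v i)
    (ψ := fun v : ({x // x ∈ T} → ℕ) => ∑ i, v i)
    (Finset.measurable_sum Finset.univ (fun i _ => measurable_pi_apply i))
    (Finset.measurable_sum Finset.univ (fun i _ => measurable_pi_apply i))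
  have e1 : ((fun v : ({x // x ∈ S} → ℕ) => ∑ i, v i) ∘ (fun a (i : S) => W i a))
      = fun ω => ∑ i ∈ Finset.range q, W (i, false) ω := by
    funext ω
    simp only [Function.comp_apply]
    rw [Finset.sum_coe_sort S (fun i => W i ω)]
    rw [hS, Finset.sum_image (by intro a _ c _ h; simpa using h)]
  have e2 : ((fun v : ({x // x ∈ T} → ℕ) => ∑ i, v i) ∘ (fun a (i : T) => W i a))
      = fun ω => ∑ i ∈ Finset.range q, W (i, true) ω := by
    funext ω
    simp only [Function.comp_apply]
    rw [Finset.sum_coe_sort T (fun i => W i ω)]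
    rw [hT, Finset.sum_image (by intro a _ c _ h; simpa using h)]
  rwa [e1, e2] at h2

lemma tail_sum (hd : 7 ≤ d) (hmeas : ∀ p, Measurable (W p))
    (hindep : iIndepFun W μ)
    (hdist : ∀ p, ∀ k, 1 ≤ k → μ {ω | W p ω = k} = ENNReal.ofReal (psi' d k))
    (b : Bool) :
    ∀ q, q ≤ d → ∀ k, 1 ≤ k →
      μ {ω | k ≤ ∑ i ∈ Finset.range q, W (i, b) ω}
        ≤ ENNReal.ofReal ((7/5) * q * psi' d k) := by
  intro q
  induction q with
  | zero =>
      intro _ k hk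
      have : {ω : Ω | k ≤ ∑ i ∈ Finset.range 0, W (i, b) ω} = ∅ := by
        ext ω; simp; omega
      rw [this]; simp
  | succ q ih =>
      intro hqd k hk
      have hqd' : q ≤ d := by omega
      have hd0 : (0:ℝ) < d := lt_of_lt_of_le (by norm_num) (by exact_mod_cast hd : (7:ℝ) ≤ d)
      set Sq : Ω → ℕ := fun ω => ∑ i ∈ Finset.range q, W (i, b) ω with hSq
      have hSmeas : Measurable Sq := by
        apply Finset.measurable_sum
        intro i _; exact hmeas _
      have hsub : {ω | k ≤ ∑ i ∈ Finset.range (q+1), W (i, b) ω} ⊆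
          {ω | k ≤ Sq ω} ∪
          ((⋃ j ∈ Finset.Ico 1 k, ({ω | W (q, b) ω = j} ∩ {ω | k - j ≤ Sq ω})) ∪
            {ω | k ≤ W (q, b) ω}) := by
        intro ω hω
        simp only [Set.mem_setOf_eq, Finset.sum_range_succ] at hω
        have hω' : k ≤ Sq ω + W (q, b) ω := hω
        by_cases h0 : W (q, b) ω = 0
        · left; simp only [Set.mem_setOf_eq, hSq]; omega
        by_cases hbig : k ≤ W (q, b) ω
        · right; right; exact hbig
        · right; left
          simp only [Set.mem_iUnion, Finset.mem_Ico, Set.mem_inter_iff, Set.mem_setOf_eq]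
          exact ⟨W (q, b) ω, ⟨by omega, by omega⟩, rfl, by omega⟩
      have hind := indep_sum_last μ W hmeas hindep q b
      have hterm : ∀ j ∈ Finset.Ico 1 k,
          μ ({ω | W (q, b) ω = j} ∩ {ω | k - j ≤ Sq ω})
            ≤ ENNReal.ofReal ((7/5) * q * (psi' d j * psi' d (k - j))) := by
        intro j hj
        simp only [Finset.mem_Ico] at hj
        have e : {ω | W (q, b) ω = j} ∩ {ω | k - j ≤ Sq ω}
            = Sq ⁻¹' (Set.Ici (k - j)) ∩ (W (q, b)) ⁻¹' {j} := by
          ext ω; simp [Set.mem_Ici, and_comm]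
        rw [e, hind.measure_inter_preimage_eq_mul _ _
          MeasurableSpace.measurableSet_top MeasurableSpace.measurableSet_top]
        have h1 : μ (Sq ⁻¹' Set.Ici (k - j)) ≤ ENNReal.ofReal ((7/5) * q * psi' d (k - j)) := by
          have := ih hqd' (k - j) (by omega)
          simpa [Set.preimage, Set.mem_Ici] using this
        have h2 : μ ((W (q, b)) ⁻¹' {j}) = ENNReal.ofReal (psi' d j) := by
          rw [show (W (q, b)) ⁻¹' {j} = {ω | W (q, b) ω = j} from rfl]
          exact hdist _ j hj.1
        calc μ (Sq ⁻¹' Set.Ici (k - j)) * μ ((W (q, b)) ⁻¹' {j})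
            ≤ ENNReal.ofReal ((7/5) * q * psi' d (k - j)) * ENNReal.ofReal (psi' d j) := by
              rw [h2]; exact mul_le_mul_left h1 _
          _ = ENNReal.ofReal ((7/5) * q * (psi' d j * psi' d (k - j))) := by
              rw [← ENNReal.ofReal_mul (mul_nonneg (by positivity) (psi'_nonneg d _))]
              congr 1; ring
      have hB : μ (⋃ j ∈ Finset.Ico 1 k, ({ω | W (q, b) ω = j} ∩ {ω | k - j ≤ Sq ω}))
          ≤ ENNReal.ofReal ((7/5) * q * (8 * ((d:ℝ)^(-1000:ℤ) * psi' d k))) := by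
        calc μ (⋃ j ∈ Finset.Ico 1 k, ({ω | W (q, b) ω = j} ∩ {ω | k - j ≤ Sq ω}))
            ≤ ∑ j ∈ Finset.Ico 1 k, μ ({ω | W (q, b) ω = j} ∩ {ω | k - j ≤ Sq ω}) :=
              measure_biUnion_finset_le _ _
          _ ≤ ∑ j ∈ Finset.Ico 1 k,
                ENNReal.ofReal ((7/5) * q * (psi' d j * psi' d (k - j))) :=
              Finset.sum_le_sum hterm
          _ = ENNReal.ofReal (∑ j ∈ Finset.Ico 1 k,
                (7/5) * q * (psi' d j * psi' d (k - j))) := by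
              rw [ENNReal.ofReal_sum_of_nonneg
                (fun j _ => mul_nonneg (by positivity) (mul_nonneg (psi'_nonneg d _) (psi'_nonneg d _)))]
          _ ≤ ENNReal.ofReal ((7/5) * q * (8 * ((d:ℝ)^(-1000:ℤ) * psi' d k))) := by
              apply ENNReal.ofReal_le_ofReal
              rw [← Finset.mul_sum]
              apply mul_le_mul_of_nonneg_left (conv_le d hd k) (by positivity)
      have hA : μ {ω | k ≤ Sq ω} ≤ ENNReal.ofReal ((7/5) * q * psi' d k) := ih hqd' k hk
      have hC : μ {ω | k ≤ W (q, b) ω} ≤ ENNReal.ofReal ((1000/999) * psi' d k) :=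
        tail_one μ d hd (W (q, b)) (hmeas _) (fun k hk => hdist _ k hk) k hk
      calc μ {ω | k ≤ ∑ i ∈ Finset.range (q+1), W (i, b) ω}
          ≤ μ ({ω | k ≤ Sq ω} ∪
              ((⋃ j ∈ Finset.Ico 1 k, ({ω | W (q, b) ω = j} ∩ {ω | k - j ≤ Sq ω})) ∪
                {ω | k ≤ W (q, b) ω})) := measure_mono hsub
        _ ≤ μ {ω | k ≤ Sq ω} +
            (μ (⋃ j ∈ Finset.Ico 1 k, ({ω | W (q, b) ω = j} ∩ {ω | k - j ≤ Sq ω})) +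
              μ {ω | k ≤ W (q, b) ω}) :=
            le_trans (measure_union_le _ _) (by
              exact add_le_add_right (measure_union_le _ _) _)
        _ ≤ ENNReal.ofReal ((7/5) * q * psi' d k) +
            (ENNReal.ofReal ((7/5) * q * (8 * ((d:ℝ)^(-1000:ℤ) * psi' d k))) +
              ENNReal.ofReal ((1000/999) * psi' d k)) := by
            exact add_le_add hA (add_le_add hB hC)
        _ = ENNReal.ofReal ((7/5) * q * psi' d k
              + ((7/5) * q * (8 * ((d:ℝ)^(-1000:ℤ) * psi' d k)) + (1000/999) * psi' d k)) := by
            have hψ : (0:ℝ) ≤ psi' d k := psi'_nonneg d k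
            have hdp : (0:ℝ) ≤ (d:ℝ)^(-1000:ℤ) := le_of_lt (zpow_pos hd0 _)
            have hn1 : (0:ℝ) ≤ 7/5*(q:ℝ)*psi' d k := mul_nonneg (by positivity) hψ
            have hn2 : (0:ℝ) ≤ 7/5*(q:ℝ)*(8*((d:ℝ)^(-1000:ℤ)*psi' d k)) :=
              mul_nonneg (by positivity) (mul_nonneg (by norm_num) (mul_nonneg hdp hψ))
            have hn3 : (0:ℝ) ≤ (1000/999:ℝ)*psi' d k := mul_nonneg (by norm_num) hψ
            rw [← ENNReal.ofReal_add hn2 hn3, ← ENNReal.ofReal_add hn1 (by linarith)]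
        _ ≤ ENNReal.ofReal ((7/5) * (q+1) * psi' d k) := by
            apply ENNReal.ofReal_le_ofReal
            have hqle : (q:ℝ) * (d:ℝ)^(-1000:ℤ) ≤ 1/1000 := by
              have hq : (q:ℝ) ≤ d := by exact_mod_cast hqd'
              have : (q:ℝ) * (d:ℝ)^(-1000:ℤ) ≤ (d:ℝ) * (d:ℝ)^(-1000:ℤ) :=
                mul_le_mul_of_nonneg_right hq (le_of_lt (zpow_pos hd0 _))
              calc (q:ℝ) * (d:ℝ)^(-1000:ℤ) ≤ (d:ℝ) * (d:ℝ)^(-1000:ℤ) := this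
                _ = (d:ℝ)^(-999:ℤ) := by
                    rw [show (-999:ℤ) = 1 + -1000 by norm_num,
                      zpow_add₀ (ne_of_gt hd0), zpow_one]
                _ ≤ 1/1000 := dpow_small d hd (by norm_num)
            have hψ : 0 ≤ psi' d k := psi'_nonneg d k
            push_cast
            nlinarith [mul_le_mul_of_nonneg_right hqle hψ]
        _ = ENNReal.ofReal ((7/5) * ((q+1 : ℕ):ℝ) * psi' d k) := by push_cast; ring_nf
      done

end Main

end Stmt14Aux

/-- Let `Z_i = (Y_i, Y_i') = (W (i, false), W (i, true))` be i.i.d. pairs with all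
coordinates independent and each distributed according to `ψ`. Then for `1 ≤ q ≤ d`
and all `k, ℓ ≥ 0`,
`P(∑_{i<q} Y_i ≥ k and ∑_{i<q} Y_i' ≥ ℓ) ≤ 2 q² ψ_k ψ_ℓ` (with `ψ_0 := 1`). -/
theorem stmt_14 {Ω : Type*} [MeasurableSpace Ω] (μ : Measure Ω) [IsProbabilityMeasure μ]
    (d : ℕ) (hd : 7 ≤ d)
    (W : ℕ × Bool → Ω → ℕ) (hmeas : ∀ p, Measurable (W p))
    (hindep : iIndepFun W μ)
    (hdist : ∀ p, ∀ k, 1 ≤ k → μ {ω | W p ω = k} = ENNReal.ofReal (psi' d k))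
    (q k ℓ : ℕ) (hq1 : 1 ≤ q) (hqd : q ≤ d) :
    μ {ω | k ≤ ∑ i ∈ Finset.range q, W (i, false) ω ∧
           ℓ ≤ ∑ i ∈ Finset.range q, W (i, true) ω}
      ≤ ENNReal.ofReal (2 * (q : ℝ) ^ 2 * psi' d k * psi' d ℓ) := by
  have hq1' : (1:ℝ) ≤ (q:ℝ) := by exact_mod_cast hq1
  have hpsi0 : psi' d 0 = 1 := by simp [psi']
  rcases Nat.eq_zero_or_pos k with hk0 | hk1
  · rcases Nat.eq_zero_or_pos ℓ with hl0 | hl1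
    · subst hk0; subst hl0
      rw [hpsi0]
      calc μ _ ≤ 1 := prob_le_one
        _ ≤ ENNReal.ofReal (2 * (q : ℝ) ^ 2 * 1 * 1) := by
            rw [ENNReal.one_le_ofReal]; nlinarith
    · subst hk0
      rw [hpsi0]
      have hsub : {ω | 0 ≤ ∑ i ∈ Finset.range q, W (i, false) ω ∧
          ℓ ≤ ∑ i ∈ Finset.range q, W (i, true) ω}
          ⊆ {ω | ℓ ≤ ∑ i ∈ Finset.range q, W (i, true) ω} := fun ω hω => hω.2
      calc μ _ ≤ μ {ω | ℓ ≤ ∑ i ∈ Finset.range q, W (i, true) ω} := measure_mono hsub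
        _ ≤ ENNReal.ofReal ((7/5) * q * psi' d ℓ) :=
            Stmt14Aux.tail_sum μ d W hd hmeas hindep hdist true q hqd ℓ hl1
        _ ≤ ENNReal.ofReal (2 * (q : ℝ) ^ 2 * 1 * psi' d ℓ) := by
            apply ENNReal.ofReal_le_ofReal
            have hψ := Stmt14Aux.psi'_nonneg d ℓ
            nlinarith [mul_nonneg (by nlinarith : (0:ℝ) ≤ 2*(q:ℝ)^2 - (7/5)*q) hψ]
  · rcases Nat.eq_zero_or_pos ℓ with hl0 | hl1
    · subst hl0
      rw [hpsi0]
      have hsub : {ω | k ≤ ∑ i ∈ Finset.range q, W (i, false) ω ∧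
          0 ≤ ∑ i ∈ Finset.range q, W (i, true) ω}
          ⊆ {ω | k ≤ ∑ i ∈ Finset.range q, W (i, false) ω} := fun ω hω => hω.1
      calc μ _ ≤ μ {ω | k ≤ ∑ i ∈ Finset.range q, W (i, false) ω} := measure_mono hsub
        _ ≤ ENNReal.ofReal ((7/5) * q * psi' d k) :=
            Stmt14Aux.tail_sum μ d W hd hmeas hindep hdist false q hqd k hk1
        _ ≤ ENNReal.ofReal (2 * (q : ℝ) ^ 2 * psi' d k * 1) := by
            apply ENNReal.ofReal_le_ofReal
            have hψ := Stmt14Aux.psi'_nonneg d k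
            nlinarith [mul_nonneg (by nlinarith : (0:ℝ) ≤ 2*(q:ℝ)^2 - (7/5)*q) hψ]
    · have hset : {ω | k ≤ ∑ i ∈ Finset.range q, W (i, false) ω ∧
          ℓ ≤ ∑ i ∈ Finset.range q, W (i, true) ω}
          = (fun ω => ∑ i ∈ Finset.range q, W (i, false) ω) ⁻¹' (Set.Ici k)
            ∩ (fun ω => ∑ i ∈ Finset.range q, W (i, true) ω) ⁻¹' (Set.Ici ℓ) := by
        ext ω; simp [Set.mem_Ici]
      rw [hset, (Stmt14Aux.indep_two_sums μ W hmeas hindep q).measure_inter_preimage_eq_mul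
        _ _ MeasurableSpace.measurableSet_top MeasurableSpace.measurableSet_top]
      have hA : μ ((fun ω => ∑ i ∈ Finset.range q, W (i, false) ω) ⁻¹' (Set.Ici k))
          ≤ ENNReal.ofReal ((7/5) * q * psi' d k) := by
        have := Stmt14Aux.tail_sum μ d W hd hmeas hindep hdist false q hqd k hk1
        simpa [Set.preimage, Set.mem_Ici] using this
      have hB : μ ((fun ω => ∑ i ∈ Finset.range q, W (i, true) ω) ⁻¹' (Set.Ici ℓ))
          ≤ ENNReal.ofReal ((7/5) * q * psi' d ℓ) := by
        have := Stmt14Aux.tail_sum μ d W hd hmeas hindep hdist true q hqd ℓ hl1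
        simpa [Set.preimage, Set.mem_Ici] using this
      have hψk := Stmt14Aux.psi'_nonneg d k
      have hψl := Stmt14Aux.psi'_nonneg d ℓ
      calc μ _ * μ _
          ≤ ENNReal.ofReal ((7/5) * q * psi' d k) * ENNReal.ofReal ((7/5) * q * psi' d ℓ) :=
            mul_le_mul' hA hB
        _ = ENNReal.ofReal (((7/5) * q * psi' d k) * ((7/5) * q * psi' d ℓ)) :=
            (ENNReal.ofReal_mul (mul_nonneg (by positivity) hψk)).symm
        _ ≤ ENNReal.ofReal (2 * (q : ℝ) ^ 2 * psi' d k * psi' d ℓ) := by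
            apply ENNReal.ofReal_le_ofReal
            nlinarith [mul_nonneg (mul_nonneg (sq_nonneg (q:ℝ)) hψk) hψl,
              mul_nonneg hψk hψl]
end

section
/- Let d ≥ 1, n ≥ 1, and let G be a d-regular graph on n vertices with adjacency matrix A. Suppose the operator norm bound ‖(1/d)·A − (1/n)·𝟙𝟙ᵀ‖ ≤ 2/√d holds, where 𝟙 is the all-ones vector. Then for all reals 0 < δ < η < 1 and every vertex subset S with |S| ≤ δ·n, the number of vertices u with deg_S(u) ≥ η·d is at most 4·|S| / (d·(η − δ)²), where deg_S(u) is the number of neighbors of u lying in S. -/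
open Finset

/-- Expansion estimate from the spectral gap: let `G` be a `d`-regular graph on `n ≥ 1`
vertices whose adjacency matrix `A` satisfies the (squared ℓ²) operator norm bound
`‖(1/d)A − (1/n)𝟙𝟙ᵀ‖ ≤ 2/√d`, expressed as
`∑_u (((1/d)A − (1/n)𝟙𝟙ᵀ) x)_u² ≤ (4/d) ∑_u x_u²` for all `x`. Then for `0 < δ < η < 1`
and any `S` with `|S| ≤ δ n`, `#{u : deg_S(u) ≥ η d} ≤ 4|S|/(d (η − δ)²)`. -/
theorem stmt_16 {V : Type*} [Fintype V] [DecidableEq V]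
    (d : ℕ) (hd : 1 ≤ d) (hn : 1 ≤ Fintype.card V)
    (G : SimpleGraph V) [DecidableRel G.Adj] (hreg : G.IsRegularOfDegree d)
    (hM : ∀ x : V → ℝ,
      ∑ u : V, ((((d : ℝ)⁻¹ • G.adjMatrix ℝ
            - (Fintype.card V : ℝ)⁻¹ • Matrix.of (fun _ _ => (1 : ℝ))).mulVec x) u) ^ 2
        ≤ 4 / (d : ℝ) * ∑ u : V, (x u) ^ 2)
    (δ η : ℝ) (hδ : 0 < δ) (hδη : δ < η) (hη : η < 1)
    (S : Finset V) (hS : (S.card : ℝ) ≤ δ * Fintype.card V) :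
    ({u : V | η * (d : ℝ) ≤ ((S.filter (fun w => G.Adj u w)).card : ℝ)}.ncard : ℝ)
      ≤ 4 * (S.card : ℝ) / ((d : ℝ) * (η - δ) ^ 2) := by
  classical
  set n := Fintype.card V
  have hd0 : (0 : ℝ) < d := by exact_mod_cast hd
  have hn0 : (0 : ℝ) < n := by exact_mod_cast hn
  set x : V → ℝ := fun v => if v ∈ S then 1 else 0 with hx
  have hsum : ∑ u : V, x u ^ 2 = S.card := by
    simp [hx, sq, ite_and]
  have key := hM x
  -- compute mulVec at each u
  have hmv : ∀ u : V, (((d : ℝ)⁻¹ • G.adjMatrix ℝ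
      - (n : ℝ)⁻¹ • Matrix.of (fun _ _ => (1 : ℝ))).mulVec x) u
      = (d : ℝ)⁻¹ * ((S.filter (fun w => G.Adj u w)).card : ℝ) - (n : ℝ)⁻¹ * S.card := by
    intro u
    have h1 : (G.adjMatrix ℝ).mulVec x u = ((S.filter (fun w => G.Adj u w)).card : ℝ) := by
      rw [SimpleGraph.adjMatrix_mulVec_apply]
      have hset : G.neighborFinset u ∩ S = S.filter (fun w => G.Adj u w) := by
        ext w; simp [SimpleGraph.mem_neighborFinset, and_comm]
      simp [hx, Finset.sum_boole, hset]
    have h2 : ((Matrix.of (fun _ _ => (1 : ℝ))).mulVec x) u = (S.card : ℝ) := by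
      simp [Matrix.mulVec, dotProduct, hx]
    rw [Matrix.sub_mulVec, Matrix.smul_mulVec, Matrix.smul_mulVec,
      Pi.sub_apply, Pi.smul_apply, Pi.smul_apply, h1, h2, smul_eq_mul, smul_eq_mul]
  set T : Finset V := Finset.univ.filter
      (fun u => η * (d : ℝ) ≤ ((S.filter (fun w => G.Adj u w)).card : ℝ)) with hT
  have hncard : ({u : V | η * (d : ℝ) ≤ ((S.filter (fun w => G.Adj u w)).card : ℝ)}.ncard : ℝ)
      = (T.card : ℝ) := by
    congr 1
    rw [Set.ncard_eq_toFinset_card']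
    congr 1
    ext u
    simp [hT]
  have hδn : (S.card : ℝ) / n ≤ δ := by
    rw [div_le_iff₀ hn0]; linarith
  have hlow : (T.card : ℝ) * (η - δ) ^ 2 ≤ ∑ u : V, ((((d : ℝ)⁻¹ • G.adjMatrix ℝ
      - (n : ℝ)⁻¹ • Matrix.of (fun _ _ => (1 : ℝ))).mulVec x) u) ^ 2 := by
    have : ∀ u ∈ T, (η - δ) ^ 2 ≤ ((((d : ℝ)⁻¹ • G.adjMatrix ℝ
        - (n : ℝ)⁻¹ • Matrix.of (fun _ _ => (1 : ℝ))).mulVec x) u) ^ 2 := by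
      intro u hu
      rw [hmv u]
      have hu' : η * (d : ℝ) ≤ ((S.filter (fun w => G.Adj u w)).card : ℝ) := by
        simpa [hT] using hu
      have h1 : η ≤ (d : ℝ)⁻¹ * ((S.filter (fun w => G.Adj u w)).card : ℝ) := by
        rw [inv_mul_eq_div, le_div_iff₀ hd0]; linarith
      have h2 : (n : ℝ)⁻¹ * S.card ≤ δ := by
        rw [inv_mul_eq_div]; exact hδn
      have : η - δ ≤ (d : ℝ)⁻¹ * ((S.filter (fun w => G.Adj u w)).card : ℝ)
          - (n : ℝ)⁻¹ * S.card := by linarith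
      exact pow_le_pow_left₀ (by linarith) this 2
    rw [show (T.card : ℝ) * (η - δ) ^ 2 = ∑ _u ∈ T, (η - δ) ^ 2 by
      rw [Finset.sum_const]; ring]
    exact (Finset.sum_le_sum this).trans
      (Finset.sum_le_sum_of_subset_of_nonneg (Finset.subset_univ T)
        (fun u _ _ => sq_nonneg _))
  rw [hncard]
  have hfinal : (T.card : ℝ) * (η - δ) ^ 2 ≤ 4 / (d : ℝ) * S.card := by
    calc (T.card : ℝ) * (η - δ) ^ 2 ≤ _ := hlow
      _ ≤ 4 / (d : ℝ) * ∑ u : V, (x u) ^ 2 := key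
      _ = 4 / (d : ℝ) * S.card := by rw [hsum]
  have hηδ : (0 : ℝ) < (η - δ) ^ 2 := pow_pos (by linarith) 2
  rw [le_div_iff₀ (mul_pos hd0 hηδ)]
  have h4 : 4 / (d : ℝ) * S.card * d = 4 * S.card := by
    field_simp
  nlinarith [hfinal]
end

section
/- Let d ≥ 1, n ≥ 1, q ≥ 2, and let G be a d-regular graph on n vertices with adjacency matrix A satisfying ‖(1/d)·A − (1/n)·𝟙𝟙ᵀ‖ ≤ 2/√d. Then for all reals 0 < η < δ < 1 and every partition V = S_1 ⊔ S_2 ⊔ ... ⊔ S_q of the vertex set with |S_1| ≥ max_{2 ≤ k ≤ q} |S_k| + δ·n, the number of vertices v with deg_{S_1}(v) ≤ max_{2 ≤ k ≤ q} deg_{S_k}(v) + η·d is at most 8·(q−1)·|S_1| / (d·(δ − η)²). -/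
open Finset

set_option maxHeartbeats 1000000

/-- Potts-version expansion estimate: let `G` be a `d`-regular graph on `n ≥ 1` vertices
whose adjacency matrix satisfies `∑_u (((1/d)A − (1/n)𝟙𝟙ᵀ) x)_u² ≤ (4/d) ∑_u x_u²` for
all `x` (i.e. `‖(1/d)A − (1/n)𝟙𝟙ᵀ‖ ≤ 2/√d`). Then for `0 < η < δ < 1` and any
`q`-partition `S_0, …, S_{q-1}` of the vertex set with
`|S_0| ≥ max_{k ≠ 0} |S_k| + δ n`, the number of vertices `v` with
`deg_{S_0}(v) ≤ max_{k ≠ 0} deg_{S_k}(v) + η d` is at most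
`8 (q − 1) |S_0| / (d (δ − η)²)`. -/
theorem stmt_17 {V : Type*} [Fintype V] [DecidableEq V]
    (d q : ℕ) (hd : 1 ≤ d) (hn : 1 ≤ Fintype.card V) (hq : 2 ≤ q)
    (G : SimpleGraph V) [DecidableRel G.Adj] (hreg : G.IsRegularOfDegree d)
    (hM : ∀ x : V → ℝ,
      ∑ u : V, ((((d : ℝ)⁻¹ • G.adjMatrix ℝ
            - (Fintype.card V : ℝ)⁻¹ • Matrix.of (fun _ _ => (1 : ℝ))).mulVec x) u) ^ 2
        ≤ 4 / (d : ℝ) * ∑ u : V, (x u) ^ 2)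
    (η δ : ℝ) (hη : 0 < η) (hηδ : η < δ) (hδ : δ < 1)
    (S : Fin q → Finset V)
    (hpart : ∀ v : V, ∃! k : Fin q, v ∈ S k)
    (hdom : ∀ k : Fin q, k ≠ ⟨0, by omega⟩ →
      ((S k).card : ℝ) + δ * Fintype.card V ≤ ((S ⟨0, by omega⟩).card : ℝ)) :
    ({v : V | ∃ k : Fin q, k ≠ ⟨0, by omega⟩ ∧
        (((S ⟨0, by omega⟩).filter (fun w => G.Adj v w)).card : ℝ)
          ≤ (((S k).filter (fun w => G.Adj v w)).card : ℝ) + η * d}.ncard : ℝ)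
      ≤ 8 * ((q : ℝ) - 1) * ((S ⟨0, by omega⟩).card : ℝ) / ((d : ℝ) * (δ - η) ^ 2) := by
  classical
  set n := Fintype.card V with hn'
  set z : Fin q := ⟨0, by omega⟩ with hz
  set S0 := S z with hS0
  have hd0 : (0:ℝ) < d := by exact_mod_cast hd
  have hn0 : (0:ℝ) < n := by exact_mod_cast hn
  have hδη : (0:ℝ) < δ - η := by linarith
  have hdisj : ∀ k, k ≠ z → Disjoint (S k) S0 := by
    intro k hk
    rw [Finset.disjoint_left]
    intro v hv hv0
    exact hk ((hpart v).unique hv hv0)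
  have hSk0 : ∀ k, k ≠ z → ((S k).card : ℝ) ≤ (S0.card : ℝ) := by
    intro k hk
    have := hdom k hk
    nlinarith [hη, hn0]
  -- per-k bad set
  set B : Fin q → Finset V := fun k => univ.filter (fun v =>
      ((S0.filter (fun w => G.Adj v w)).card : ℝ)
        ≤ (((S k).filter (fun w => G.Adj v w)).card : ℝ) + η * d) with hB
  have key : ∀ k : Fin q, k ≠ z →
      ((B k).card : ℝ) ≤ 8 * (S0.card : ℝ) / ((d : ℝ) * (δ - η) ^ 2) := by
    intro k hk
    set x : V → ℝ := fun u => (if u ∈ S k then (1:ℝ) else 0) - (if u ∈ S0 then 1 else 0)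
      with hx
    have hMx := hM x
    have hMv : ∀ v, (((d : ℝ)⁻¹ • G.adjMatrix ℝ
          - (n:ℝ)⁻¹ • Matrix.of (fun _ _ => (1:ℝ))).mulVec x) v
        = (d:ℝ)⁻¹ * ((((S k).filter (fun w => G.Adj v w)).card : ℝ)
            - ((S0.filter (fun w => G.Adj v w)).card : ℝ))
          - (n:ℝ)⁻¹ * (((S k).card : ℝ) - (S0.card : ℝ)) := by
      intro v
      rw [Matrix.sub_mulVec]
      simp only [Pi.sub_apply, Matrix.smul_mulVec, Pi.smul_apply, smul_eq_mul]
      have e1 : (G.neighborFinset v).filter (fun u => u ∈ S k)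
          = (S k).filter (fun w => G.Adj v w) := by
        ext u; simp [SimpleGraph.mem_neighborFinset, and_comm]
      have e2 : (G.neighborFinset v).filter (fun u => u ∈ S0)
          = S0.filter (fun w => G.Adj v w) := by
        ext u; simp [SimpleGraph.mem_neighborFinset, and_comm]
      congr 1
      · congr 1
        rw [SimpleGraph.adjMatrix_mulVec_apply]
        simp only [hx]
        rw [Finset.sum_sub_distrib, Finset.sum_boole, Finset.sum_boole, e1, e2]
      · congr 1
        have hJ : ∀ u : V, (Matrix.of (fun _ _ => (1:ℝ)) : Matrix V V ℝ) v u = 1 := fun u => rfl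
        simp only [Matrix.mulVec, dotProduct, hJ, one_mul, hx]
        rw [Finset.sum_sub_distrib, Finset.sum_boole, Finset.sum_boole,
          Finset.filter_mem_eq_inter, Finset.filter_mem_eq_inter,
          Finset.univ_inter, Finset.univ_inter]
    -- ∑ x² ≤ 2|S0|
    have hsumx : ∑ u : V, (x u)^2 ≤ 2 * (S0.card : ℝ) := by
      have hpt : ∀ u : V, (x u)^2
          = (if u ∈ S k then (1:ℝ) else 0) + (if u ∈ S0 then 1 else 0) := by
        intro u
        by_cases h1 : u ∈ S k <;> by_cases h2 : u ∈ S0 <;>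
          simp [hx, h1, h2]
        exact absurd h2 (Finset.disjoint_left.mp (hdisj k hk) h1)
      calc ∑ u : V, (x u)^2
          = ∑ u : V, ((if u ∈ S k then (1:ℝ) else 0) + (if u ∈ S0 then 1 else 0)) := by
            exact Finset.sum_congr rfl (fun u _ => hpt u)
        _ = ((S k).card : ℝ) + (S0.card : ℝ) := by
            rw [Finset.sum_add_distrib, Finset.sum_boole, Finset.sum_boole]
            congr 2 <;> rw [Finset.filter_mem_eq_inter, Finset.univ_inter]
        _ ≤ 2 * (S0.card : ℝ) := by
            have := hSk0 k hk
            linarith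
    -- lower bound on each bad vertex
    have hlow : ∀ v ∈ B k, (δ - η)^2
        ≤ ((((d : ℝ)⁻¹ • G.adjMatrix ℝ
          - (n:ℝ)⁻¹ • Matrix.of (fun _ _ => (1:ℝ))).mulVec x) v)^2 := by
      intro v hv
      rw [hB, Finset.mem_filter] at hv
      have hbad := hv.2
      rw [hMv v]
      have h1 : -η ≤ (d:ℝ)⁻¹ * ((((S k).filter (fun w => G.Adj v w)).card : ℝ)
          - ((S0.filter (fun w => G.Adj v w)).card : ℝ)) := by
        have hab : -(η * d) ≤ (((S k).filter (fun w => G.Adj v w)).card : ℝ)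
            - ((S0.filter (fun w => G.Adj v w)).card : ℝ) := by linarith
        have := mul_le_mul_of_nonneg_left hab (le_of_lt (inv_pos.mpr hd0))
        have heq : (d:ℝ)⁻¹ * -(η * d) = -η := by field_simp
        linarith [heq ▸ this]
      have h2 : δ ≤ -((n:ℝ)⁻¹ * (((S k).card : ℝ) - (S0.card : ℝ))) := by
        have hdk := hdom k hk
        have hab : δ * n ≤ (S0.card : ℝ) - ((S k).card : ℝ) := by linarith
        have := mul_le_mul_of_nonneg_left hab (le_of_lt (inv_pos.mpr hn0))
        have heq : (n:ℝ)⁻¹ * (δ * n) = δ := by field_simp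
        have heq2 : -((n:ℝ)⁻¹ * (((S k).card : ℝ) - (S0.card : ℝ)))
            = (n:ℝ)⁻¹ * ((S0.card : ℝ) - ((S k).card : ℝ)) := by ring
        rw [heq2]; linarith [heq ▸ this]
      have hpos : δ - η ≤ (d:ℝ)⁻¹ * ((((S k).filter (fun w => G.Adj v w)).card : ℝ)
            - ((S0.filter (fun w => G.Adj v w)).card : ℝ))
          - (n:ℝ)⁻¹ * (((S k).card : ℝ) - (S0.card : ℝ)) := by linarith
      nlinarith [hpos, hδη]
    -- combine
    have hsum : ((B k).card : ℝ) * (δ - η)^2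
        ≤ 8 * (S0.card : ℝ) / (d : ℝ) := by
      calc ((B k).card : ℝ) * (δ - η)^2
          = ∑ v ∈ B k, (δ - η)^2 := by rw [Finset.sum_const, nsmul_eq_mul]
        _ ≤ ∑ v ∈ B k, ((((d : ℝ)⁻¹ • G.adjMatrix ℝ
              - (n:ℝ)⁻¹ • Matrix.of (fun _ _ => (1:ℝ))).mulVec x) v)^2 :=
            Finset.sum_le_sum hlow
        _ ≤ ∑ v : V, ((((d : ℝ)⁻¹ • G.adjMatrix ℝ
              - (n:ℝ)⁻¹ • Matrix.of (fun _ _ => (1:ℝ))).mulVec x) v)^2 :=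
            Finset.sum_le_sum_of_subset_of_nonneg (Finset.subset_univ _)
              (fun v _ _ => sq_nonneg _)
        _ ≤ 4 / (d : ℝ) * ∑ u : V, (x u)^2 := hMx
        _ ≤ 4 / (d : ℝ) * (2 * (S0.card : ℝ)) := by
            apply mul_le_mul_of_nonneg_left hsumx (by positivity)
        _ = 8 * (S0.card : ℝ) / (d : ℝ) := by ring
    rw [le_div_iff₀ (by positivity)]
    calc ((B k).card : ℝ) * ((d:ℝ) * (δ - η)^2)
        = (((B k).card : ℝ) * (δ - η)^2) * d := by ring
      _ ≤ (8 * (S0.card : ℝ) / (d : ℝ)) * d := by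
          apply mul_le_mul_of_nonneg_right hsum hd0.le
      _ = 8 * (S0.card : ℝ) := by field_simp
  -- the full bad set
  have hset : {v : V | ∃ k : Fin q, k ≠ z ∧
        ((S0.filter (fun w => G.Adj v w)).card : ℝ)
          ≤ (((S k).filter (fun w => G.Adj v w)).card : ℝ) + η * d}
      = ↑(univ.filter (fun v => ∃ k : Fin q, k ≠ z ∧
        ((S0.filter (fun w => G.Adj v w)).card : ℝ)
          ≤ (((S k).filter (fun w => G.Adj v w)).card : ℝ) + η * d)) := by
    ext v; simp
  rw [hset, Set.ncard_coe_finset]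
  have hsub : (univ.filter (fun v => ∃ k : Fin q, k ≠ z ∧
        ((S0.filter (fun w => G.Adj v w)).card : ℝ)
          ≤ (((S k).filter (fun w => G.Adj v w)).card : ℝ) + η * d))
      ⊆ (univ.erase z).biUnion B := by
    intro v hv
    rw [Finset.mem_filter] at hv
    obtain ⟨k, hk, hkv⟩ := hv.2
    exact Finset.mem_biUnion.mpr ⟨k, Finset.mem_erase.mpr ⟨hk, Finset.mem_univ k⟩,
      Finset.mem_filter.mpr ⟨Finset.mem_univ v, hkv⟩⟩
  calc ((univ.filter (fun v => ∃ k : Fin q, k ≠ z ∧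
        ((S0.filter (fun w => G.Adj v w)).card : ℝ)
          ≤ (((S k).filter (fun w => G.Adj v w)).card : ℝ) + η * d)).card : ℝ)
      ≤ (((univ.erase z).biUnion B).card : ℝ) := by
        exact_mod_cast Finset.card_le_card hsub
    _ ≤ ∑ k ∈ univ.erase z, ((B k).card : ℝ) := by
        exact_mod_cast Finset.card_biUnion_le
    _ ≤ ∑ k ∈ univ.erase z, (8 * (S0.card : ℝ) / ((d : ℝ) * (δ - η) ^ 2)) := by
        apply Finset.sum_le_sum
        intro k hk
        exact key k (Finset.mem_erase.mp hk).1
    _ = ((q : ℝ) - 1) * (8 * (S0.card : ℝ) / ((d : ℝ) * (δ - η) ^ 2)) := by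
        rw [Finset.sum_const, nsmul_eq_mul, Finset.card_erase_of_mem (Finset.mem_univ z),
          Finset.card_univ, Fintype.card_fin]
        congr 1
        have : 1 ≤ q := by omega
        push_cast [Nat.cast_sub this]
        ring
    _ = 8 * ((q : ℝ) - 1) * ((S0.card : ℝ)) / ((d : ℝ) * (δ - η) ^ 2) := by ring
end
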